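/- arXiv:1211.2612 — 7 statements merged into one kernel-verified Lean document; each statement's English description precedes it below -/
import Mathlib

section
/- Let G be a finite group and H <= G a subgroup. Then D(G) <= D(H) * [G : H], where D denotes the large Davenport constant. -/
/-- The set of products of a multiset `S` over `G`: all elements obtained by
multiplying the terms of `S` in some order. -/
def prodSet {G : Type*} [Group G] (S : Multiset G) : Set G :=
  {g | ∃ l : List G, (l : Multiset G) = S ∧ l.prod = g}

/-- `S` is a product-one sequence if its terms can be ordered with product `1`. -/
def IsProductOne {G : Type*} [Group G] (S : Multiset G) : Prop :=
  (1 : G) ∈ prodSet S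

/-- `S` is product-one free if no nonempty sub-multiset is a product-one sequence. -/
def ProductOneFree {G : Type*} [Group G] (S : Multiset G) : Prop :=
  ∀ T : Multiset G, T ≤ S → T ≠ 0 → ¬ IsProductOne T

/-- `S` is a minimal product-one sequence (an atom): a nonempty product-one sequence
that cannot be factored into two nonempty product-one sub-multisets. -/
def IsMinimalProductOne {G : Type*} [Group G] (S : Multiset G) : Prop :=
  S ≠ 0 ∧ IsProductOne S ∧
    ¬ ∃ T T' : Multiset G, S = T + T' ∧ T ≠ 0 ∧ T' ≠ 0 ∧ IsProductOne T ∧ IsProductOne T'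

/-- The small Davenport constant: the supremum of lengths of product-one free sequences. -/
noncomputable def smallDavenport (G : Type*) [Group G] : ℕ∞ :=
  sSup {n : ℕ∞ | ∃ S : Multiset G, ProductOneFree S ∧ (S.card : ℕ∞) = n}

/-- The large Davenport constant: the supremum of lengths of minimal product-one sequences. -/
noncomputable def largeDavenport (G : Type*) [Group G] : ℕ∞ :=
  sSup {n : ℕ∞ | ∃ S : Multiset G, IsMinimalProductOne S ∧ (S.card : ℕ∞) = n}

/-!
Order a minimal product-one sequence over `G` as `g₁ ⋯ gₙ = 1`. By pigeonhole, at least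
`n / [G : H]` of the prefix products `g₁ ⋯ gᵢ` (`0 ≤ i < n`) lie in one left coset of `H`, and
rotating the sequence to start at the first of them moves all of these prefix products into `H`.
Cutting the rotated sequence at these positions yields at least `n / [G : H]` nonempty blocks
whose products lie in `H` and multiply to `1`. A factorization of these block products into two
product-one sequences would lift to one of the original sequence, so they form a minimal
product-one sequence over `H`, and `n / [G : H] ≤ D(H)`.
-/

namespace Multiset

variable {α β : Type*} {f : α → β}

theorem exists_coe_eq_map_eq_of_coe_eq_map {s : Multiset α} {m : List β}
    (h : (m : Multiset β) = s.map f) : ∃ l : List α, (l : Multiset α) = s ∧ l.map f = m := by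
  induction m generalizing s with
  | nil => exact ⟨[], by simpa [eq_comm] using h, rfl⟩
  | cons b m ih =>
    obtain ⟨a, ha, rfl⟩ := mem_map.mp (h ▸ mem_coe.mpr List.mem_cons_self)
    obtain ⟨s, rfl⟩ := exists_cons_of_mem ha
    rw [map_cons, ← cons_coe, cons_inj_right] at h
    obtain ⟨l, rfl, rfl⟩ := ih h
    exact ⟨a :: l, rfl, rfl⟩

theorem exists_add_map_eq_of_map_eq_add {s : Multiset α} {t u : Multiset β}
    (h : s.map f = t + u) : ∃ t' u' : Multiset α, s = t' + u' ∧ t'.map f = t ∧ u'.map f = u := by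
  induction s using Multiset.induction_on generalizing t u with
  | empty => exact ⟨0, 0, by simp_all [eq_comm]⟩
  | cons a s ih =>
    have ha : f a ∈ t + u := h ▸ mem_map_of_mem f (mem_cons_self a s)
    rcases mem_add.mp ha with ht | hu
    · obtain ⟨t, rfl⟩ := exists_cons_of_mem ht
      rw [map_cons, cons_add, cons_inj_right] at h
      obtain ⟨t', u', rfl, rfl, rfl⟩ := ih h
      exact ⟨a ::ₘ t', u', by rw [cons_add], by rw [map_cons], rfl⟩
    · obtain ⟨u, rfl⟩ := exists_cons_of_mem hu
      rw [map_cons, add_cons, cons_inj_right] at h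
      obtain ⟨t', u', rfl, rfl, rfl⟩ := ih h
      exact ⟨t', a ::ₘ u', by rw [add_cons], rfl, by rw [map_cons]⟩

end Multiset

section ProductOne

variable {G K : Type*} [Group G] [Group K]

theorem IsProductOne.map {S : Multiset G} (hS : IsProductOne S) (f : G →* K) :
    IsProductOne (S.map f) := by
  obtain ⟨l, rfl, hl⟩ := hS
  exact ⟨l.map f, rfl, by rw [← map_list_prod, hl, map_one]⟩

theorem isProductOne_of_map {S : Multiset G} {f : G →* K} (hf : Function.Injective f)
    (hS : IsProductOne (S.map f)) : IsProductOne S := by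
  obtain ⟨m, hm, hm1⟩ := hS
  obtain ⟨l, rfl, rfl⟩ := Multiset.exists_coe_eq_map_eq_of_coe_eq_map hm
  exact ⟨l, rfl, hf (by rwa [map_list_prod, map_one])⟩

theorem IsMinimalProductOne.of_map {S : Multiset G} {f : G →* K} (hf : Function.Injective f)
    (hS : IsMinimalProductOne (S.map f)) : IsMinimalProductOne S := by
  obtain ⟨hS0, hS1, hSmin⟩ := hS
  refine ⟨fun h ↦ hS0 (by rw [h, Multiset.map_zero]), isProductOne_of_map hf hS1, ?_⟩
  rintro ⟨T, T', rfl, hT0, hT'0, hT1, hT'1⟩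
  exact hSmin ⟨T.map f, T'.map f, Multiset.map_add _ _ _, by simpa using hT0, by simpa using hT'0,
    hT1.map f, hT'1.map f⟩

theorem isProductOne_sum_of_isProductOne_map_prod {C : Multiset (List G)}
    (hC : IsProductOne (C.map List.prod)) : IsProductOne (C.map Multiset.ofList).sum := by
  obtain ⟨m, hm, hm1⟩ := hC
  obtain ⟨L, rfl, rfl⟩ := Multiset.exists_coe_eq_map_eq_of_coe_eq_map hm
  exact ⟨L.flatten, (Multiset.coe_join L).symm, by rwa [List.prod_flatten]⟩

theorem IsMinimalProductOne.map_prod {C : Multiset (List G)} (hC : ∀ b ∈ C, b ≠ [])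
    (hmin : IsMinimalProductOne (C.map Multiset.ofList).sum)
    (h1 : IsProductOne (C.map List.prod)) : IsMinimalProductOne (C.map List.prod) := by
  refine ⟨fun h ↦ hmin.1 (by simp_all), h1, ?_⟩
  rintro ⟨T, T', hTT', hT0, hT'0, hT1, hT'1⟩
  obtain ⟨B, B', rfl, rfl, rfl⟩ := Multiset.exists_add_map_eq_of_map_eq_add hTT'
  have sum_ne_zero : ∀ D ≤ B + B', D.map List.prod ≠ 0 → (D.map Multiset.ofList).sum ≠ 0 := by
    intro D hD hD0 h0
    obtain ⟨b, hb⟩ := Multiset.exists_mem_of_ne_zero (by simpa using hD0)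
    exact hC b (Multiset.mem_of_le hD hb)
      (by simpa using Multiset.sum_eq_zero_iff.mp h0 _ (Multiset.mem_map_of_mem _ hb))
  exact hmin.2.2 ⟨_, _, by rw [Multiset.map_add, Multiset.sum_add],
    sum_ne_zero B (Multiset.le_add_right _ _) hT0, sum_ne_zero B' (Multiset.le_add_left _ _) hT'0,
    isProductOne_sum_of_isProductOne_map_prod hT1, isProductOne_sum_of_isProductOne_map_prod hT'1⟩

theorem IsMinimalProductOne.card_le_largeDavenport {S : Multiset G} (hS : IsMinimalProductOne S) :
    (S.card : ℕ∞) ≤ largeDavenport G :=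
  le_sSup ⟨S, hS, rfl⟩

theorem IsMinimalProductOne.card_le_largeDavenport_subgroup {S : Multiset G}
    (hS : IsMinimalProductOne S) (H : Subgroup G) (hSH : ∀ g ∈ S, g ∈ H) :
    (S.card : ℕ∞) ≤ largeDavenport H := by
  lift S to Multiset H using hSH
  simpa using (hS.of_map (f := H.subtype) H.subtype_injective).card_le_largeDavenport

end ProductOne

section PrefixProducts

variable {G : Type*} [Group G]

open Finset

open Classical in
noncomputable def prefixProdMemCount (H : Subgroup G) (l : List G) : ℕ :=
  #{i ∈ range l.length | (l.take i).prod ∈ H}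

/-- Cutting `l` right before every term at which the prefix product lies in `H` splits it into
blocks with products in `H`. -/
theorem exists_flatten_eq_prefixProdMemCount_le (H : Subgroup G) (l : List G)
    (hl : l.prod ∈ H) :
    ∃ L : List (List G), L.flatten = l ∧ (∀ b ∈ L, b ≠ [] ∧ b.prod ∈ H) ∧
      prefixProdMemCount H l ≤ L.length := by
  classical
  obtain rfl | hne := eq_or_ne l []
  · exact ⟨[], rfl, by simp, by simp [prefixProdMemCount]⟩
  set A := {i ∈ range l.length | (l.take i).prod ∈ H}
  have hA : A.Nonempty := ⟨0, by simpa [A] using List.length_pos_iff.mpr hne⟩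
  set k := A.max' hA
  have hk : k < l.length ∧ (l.take k).prod ∈ H :=
    (mem_filter.mp (A.max'_mem hA)).imp_left mem_range.mp
  obtain ⟨L, hLl, hLH, hLc⟩ := exists_flatten_eq_prefixProdMemCount_le H (l.take k) hk.2
  refine ⟨L ++ [l.drop k], by simp [hLl], ?_, ?_⟩
  · have hdrop : (l.drop k).prod ∈ H :=
      (H.mul_mem_cancel_left hk.2).mp (by rwa [List.prod_take_mul_prod_drop])
    simpa [or_imp, forall_and, List.drop_eq_nil_iff, hk.1, hdrop] using hLH
  · have hsub : A ⊆ insert k {i ∈ range (l.take k).length | ((l.take k).take i).prod ∈ H} := by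
      intro i hi
      rcases (show i ≤ k from A.le_max' i hi).lt_or_eq with hik | hik
      · refine mem_insert_of_mem (mem_filter.mpr ⟨by simp [hik, hk.1.le], ?_⟩)
        rw [List.take_take, min_eq_left hik.le]
        exact (mem_filter.mp hi).2
      · exact hik ▸ mem_insert_self _ _
    calc prefixProdMemCount H l = #A := rfl
      _ ≤ prefixProdMemCount H (l.take k) + 1 := (card_le_card hsub).trans (card_insert_le _ _)
      _ ≤ (L ++ [l.drop k]).length := by simpa using hLc
termination_by l.length
decreasing_by rw [List.length_take]; exact min_lt_of_left_lt hk.1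

theorem prod_take_sub_rotate {l : List G} {m i : ℕ} (hmi : m ≤ i) (hi : i ≤ l.length) :
    ((l.rotate m).take (i - m)).prod = (l.take m).prod⁻¹ * (l.take i).prod := by
  have hm : m ≤ l.length := hmi.trans hi
  rw [List.rotate_eq_drop_append_take hm,
    List.take_append_of_le_length (by rw [List.length_drop]; omega), ← Nat.add_sub_cancel' hmi,
    List.take_add, List.prod_append, inv_mul_cancel_left, Nat.add_sub_cancel_left]

theorem card_le_prefixProdMemCount_rotate (H : Subgroup G) (l : List G) (m : ℕ) (F : Finset ℕ)
    (hF : ∀ i ∈ F, m ≤ i ∧ i < l.length ∧ (l.take m).prod⁻¹ * (l.take i).prod ∈ H) :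
    #F ≤ prefixProdMemCount H (l.rotate m) := by
  refine card_le_card_of_injOn (· - m) (fun i hi ↦ ?_) (fun i hi j hj hij ↦ ?_)
  · obtain ⟨hmi, hil, hiH⟩ := hF i hi
    simp only [coe_filter, mem_range, List.length_rotate, Set.mem_ofPred_eq]
    exact ⟨by omega, by rwa [prod_take_sub_rotate hmi hil.le]⟩
  · have := (hF i hi).1
    have := (hF j hj).1
    simp only at hij
    omega

theorem exists_length_le_index_mul_prefixProdMemCount_rotate (H : Subgroup G) [H.FiniteIndex]
    (l : List G) : ∃ m, l.length ≤ H.index * prefixProdMemCount H (l.rotate m) := by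
  classical
  have : Fintype (G ⧸ H) := Fintype.ofFinite _
  have hindex : (0 : ℚ) < H.index := by
    exact_mod_cast Nat.pos_of_ne_zero H.index_ne_zero_of_finite
  obtain ⟨q, -, hq⟩ := exists_le_card_fiber_of_nsmul_le_card_of_maps_to
    (s := range l.length) (f := fun i ↦ ((l.take i).prod : G ⧸ H)) (b := (l.length / H.index : ℚ))
    (fun _ _ ↦ mem_univ _) univ_nonempty (by
      rw [card_univ, ← Nat.card_eq_fintype_card, ← Subgroup.index_eq_card, nsmul_eq_mul,
        mul_div_cancel₀ _ hindex.ne']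
      simp)
  set F := {i ∈ range l.length | ((l.take i).prod : G ⧸ H) = q}
  have hlF : l.length ≤ H.index * #F := by
    rw [div_le_iff₀' hindex] at hq
    exact_mod_cast hq
  rcases F.eq_empty_or_nonempty with hF | hF
  · exact ⟨0, by rw [hF, card_empty, mul_zero] at hlF; omega⟩
  refine ⟨F.min' hF, hlF.trans (Nat.mul_le_mul_left _ ?_)⟩
  apply card_le_prefixProdMemCount_rotate
  intro i hi
  have hmin := F.min'_mem hF
  simp only [F, mem_filter, mem_range] at hi hmin
  exact ⟨F.min'_le i (by simpa [F] using hi), hi.1, QuotientGroup.eq.mp (hmin.2.trans hi.2.symm)⟩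

end PrefixProducts

/-- For a finite group `G` and a subgroup `H ≤ G`, `D(G) ≤ D(H) * [G : H]`. -/
theorem largeDavenport_le_subgroup_mul_index {G : Type*} [Group G] [Finite G]
    (H : Subgroup G) :
    largeDavenport G ≤ largeDavenport H * (H.index : ℕ∞) := by
  refine sSup_le ?_
  rintro _ ⟨S, hS, rfl⟩
  obtain ⟨l, rfl, hl1⟩ := hS.2.1
  obtain ⟨m, hlm⟩ := exists_length_le_index_mul_prefixProdMemCount_rotate H l
  have hrot1 : (l.rotate m).prod = 1 := List.prod_rotate_eq_one_of_prod_eq_one hl1 m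
  obtain ⟨L, hLl, hLH, hLm⟩ :=
    exists_flatten_eq_prefixProdMemCount_le H (l.rotate m) (hrot1 ▸ H.one_mem)
  have hsum : ((L : Multiset (List G)).map Multiset.ofList).sum = l := by
    rw [Multiset.map_coe, ← Multiset.join, Multiset.coe_join, hLl]
    exact Multiset.coe_eq_coe.mpr (List.rotate_perm l m)
  have hblocks : IsMinimalProductOne ((L : Multiset (List G)).map List.prod) :=
    IsMinimalProductOne.map_prod (fun b hb ↦ (hLH b hb).1) (hsum ▸ hS)
      ⟨L.map List.prod, rfl, by rw [← List.prod_flatten, hLl, hrot1]⟩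
  have hLD : (L.length : ℕ∞) ≤ largeDavenport H := by
    simpa using hblocks.card_le_largeDavenport_subgroup H (by simpa using fun b hb ↦ (hLH b hb).2)
  calc ((l : Multiset G).card : ℕ∞) ≤ (H.index * L.length : ℕ) := by
        exact_mod_cast hlm.trans (Nat.mul_le_mul_left _ hLm)
    _ = L.length * H.index := by push_cast; ring
    _ ≤ largeDavenport H * H.index := mul_le_mul_left hLD _
end

section
/- Let G be a finite group whose commutator subgroup G' = [G,G] has order at most 2. Then D(G) <= d(G) + |G'|. -/
section

variable {G : Type*} [Group G]

lemma mul_mem_prodSet_add {T C : Multiset G} {a b : G} (ha : a ∈ prodSet T)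
    (hb : b ∈ prodSet C) : a * b ∈ prodSet (T + C) := by
  obtain ⟨l₁, rfl, rfl⟩ := ha
  obtain ⟨l₂, rfl, rfl⟩ := hb
  exact ⟨l₁ ++ l₂, rfl, List.prod_append⟩

lemma mul_mem_prodSet_cons {S : Multiset G} {a : G} (x : G) (ha : a ∈ prodSet S) :
    x * a ∈ prodSet (x ::ₘ S) := by
  obtain ⟨l, rfl, rfl⟩ := ha
  exact ⟨x :: l, rfl, List.prod_cons⟩

lemma prodSet_nonempty (S : Multiset G) : (prodSet S).Nonempty :=
  ⟨S.toList.prod, S.toList, Multiset.coe_toList S, rfl⟩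

lemma mul_inv_mem_commutator_of_mem_prodSet {S : Multiset G} {a b : G}
    (ha : a ∈ prodSet S) (hb : b ∈ prodSet S) : a * b⁻¹ ∈ commutator G := by
  obtain ⟨l₁, hl₁, rfl⟩ := ha
  obtain ⟨l₂, rfl, rfl⟩ := hb
  have hperm : l₁.Perm l₂ := Multiset.coe_eq_coe.mp hl₁
  have h : Abelianization.of (l₁.prod * l₂.prod⁻¹) = 1 := by
    rw [map_mul, map_inv, map_list_prod, map_list_prod, (hperm.map _).prod_eq, mul_inv_cancel]
  exact (QuotientGroup.eq_one_iff _).mp h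

lemma prodSet_subsingleton_of_pairwise_commute {S : Multiset G}
    (hS : ∀ x ∈ S, ∀ y ∈ S, Commute x y) : (prodSet S).Subsingleton := by
  rintro _ ⟨l₁, hl₁, rfl⟩ _ ⟨l₂, rfl, rfl⟩
  refine (Multiset.coe_eq_coe.mp hl₁).prod_eq' <|
    List.pairwise_of_forall_mem_list fun x hx y hy => ?_
  exact hS x (by rw [← hl₁]; exact hx) y (by rw [← hl₁]; exact hy)

lemma Subgroup.eq_of_ne_one_of_card_le_two {H : Subgroup G} [Finite H] (hH : Nat.card H ≤ 2)
    {a b : G} (ha : a ∈ H) (hb : b ∈ H) (ha1 : a ≠ 1) (hb1 : b ≠ 1) : a = b := by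
  by_contra hab
  have hinj : Function.Injective (![⟨1, H.one_mem⟩, ⟨a, ha⟩, ⟨b, hb⟩] : Fin 3 → H) := by
    intro i j hij
    fin_cases i <;> fin_cases j <;> simp_all [Subtype.ext_iff, eq_comm]
  have := Nat.card_le_card_of_injective _ hinj
  simp only [Nat.card_eq_fintype_card, Fintype.card_fin] at this
  omega

lemma exists_isProductOne_add_of_smallDavenport_lt {U : Multiset G}
    (hU : smallDavenport G < U.card) : ∃ T C, U = T + C ∧ T ≠ 0 ∧ IsProductOne T := by
  by_contra! hfree
  refine hU.not_ge (le_sSup ⟨U, fun T hTU hT0 hT => ?_, rfl⟩)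
  obtain ⟨C, rfl⟩ := Multiset.le_iff_exists_add.mp hTU
  exact hfree T C rfl hT0 hT

namespace IsMinimalProductOne

variable {S T C : Multiset G}

lemma mem_commutator_of_mem_prodSet (hS : IsMinimalProductOne (T + C)) (hT : IsProductOne T)
    {c : G} (hc : c ∈ prodSet C) : c ∈ commutator G := by
  simpa using mul_inv_mem_commutator_of_mem_prodSet (one_mul c ▸ mul_mem_prodSet_add hT hc) hS.2.1

lemma ne_one_of_mem_prodSet (hS : IsMinimalProductOne (T + C)) (hT0 : T ≠ 0)
    (hT : IsProductOne T) (hC0 : C ≠ 0) {c : G} (hc : c ∈ prodSet C) : c ≠ 1 := by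
  rintro rfl
  exact hS.2.2 ⟨T, C, rfl, hT0, hC0, hT, hc⟩

lemma commute_of_smallDavenport_add_two_lt [Finite (commutator G)]
    (hG : Nat.card (commutator G) ≤ 2) (hS : IsMinimalProductOne S)
    (hlen : smallDavenport G + 2 < S.card)
    {x y : G} (hx : x ∈ S) (hy : y ∈ S) : Commute x y := by
  rcases eq_or_ne x y with rfl | hxy
  · exact Commute.refl x
  obtain ⟨S', rfl⟩ := Multiset.exists_cons_of_mem hx
  obtain ⟨R, rfl⟩ := Multiset.exists_cons_of_mem ((Multiset.mem_cons.mp hy).resolve_left hxy.symm)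
  have hR : smallDavenport G < R.card := by
    rw [← ENat.add_lt_add_iff_right (k := 2) (by simp)]
    simpa [add_assoc, one_add_one_eq_two] using hlen
  obtain ⟨T, C, rfl, hT0, hT⟩ := exists_isProductOne_add_of_smallDavenport_lt hR
  rw [← Multiset.add_cons, ← Multiset.add_cons] at hS
  have hmem : ∀ c ∈ prodSet (x ::ₘ y ::ₘ C), c ∈ commutator G ∧ c ≠ 1 := fun c hc =>
    ⟨hS.mem_commutator_of_mem_prodSet hT hc, hS.ne_one_of_mem_prodSet hT0 hT (by simp) hc⟩
  obtain ⟨p, hp⟩ := prodSet_nonempty C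
  have hxyp : x * y * p ∈ prodSet (x ::ₘ y ::ₘ C) :=
    mul_assoc x y p ▸ mul_mem_prodSet_cons x (mul_mem_prodSet_cons y hp)
  have hyxp : y * x * p ∈ prodSet (x ::ₘ y ::ₘ C) :=
    Multiset.cons_swap y x C ▸ mul_assoc y x p ▸ mul_mem_prodSet_cons y (mul_mem_prodSet_cons x hp)
  obtain ⟨hxyG, hxy1⟩ := hmem _ hxyp
  obtain ⟨hyxG, hyx1⟩ := hmem _ hyxp
  exact mul_right_cancel (Subgroup.eq_of_ne_one_of_card_le_two hG hxyG hyxG hxy1 hyx1)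

lemma card_le_smallDavenport_add_one_of_pairwise_commute (hS : IsMinimalProductOne S)
    (hcomm : ∀ x ∈ S, ∀ y ∈ S, Commute x y) : (S.card : ℕ∞) ≤ smallDavenport G + 1 := by
  by_contra! hlen
  obtain ⟨x, hx⟩ := Multiset.exists_mem_of_ne_zero hS.1
  obtain ⟨R, rfl⟩ := Multiset.exists_cons_of_mem hx
  have hR : smallDavenport G < R.card := by
    rw [← ENat.add_lt_add_iff_right (k := 1) (by simp)]
    simpa using hlen
  obtain ⟨T, C, rfl, hT0, hT⟩ := exists_isProductOne_add_of_smallDavenport_lt hR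
  rw [← Multiset.add_cons] at hS hcomm
  obtain ⟨c, hc⟩ := prodSet_nonempty (x ::ₘ C)
  refine hS.ne_one_of_mem_prodSet hT0 hT Multiset.cons_ne_zero hc ?_
  exact prodSet_subsingleton_of_pairwise_commute hcomm
    (one_mul c ▸ mul_mem_prodSet_add hT hc) hS.2.1

end IsMinimalProductOne

end

/-- If the commutator subgroup of a finite group `G` has order at most `2`, then
`D(G) ≤ d(G) + |G'|`. -/
theorem largeDavenport_le_of_commutator_small (G : Type*) [Group G] [Finite G]
    (h : Nat.card (commutator G) ≤ 2) :
    largeDavenport G ≤ smallDavenport G + (Nat.card (commutator G) : ℕ∞) := by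
  refine sSup_le ?_
  rintro _ ⟨S, hS, rfl⟩
  have hk : 0 < Nat.card (commutator G) := Nat.card_pos
  by_contra! hlen
  have hcomm : ∀ x ∈ S, ∀ y ∈ S, Commute x y := by
    obtain hk1 | hk2 : Nat.card (commutator G) = 1 ∨ Nat.card (commutator G) = 2 := by omega
    · have := (commutator_eq_bot_iff G).mp (Subgroup.card_eq_one.mp hk1)
      exact fun x _ y _ => this.is_comm.comm x y
    · rw [hk2] at hlen
      exact fun x hx y hy => hS.commute_of_smallDavenport_add_two_lt h hlen hx hy
  refine (hS.card_le_smallDavenport_add_one_of_pairwise_commute hcomm).not_gt <|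
    lt_of_le_of_lt ?_ hlen
  gcongr
  exact_mod_cast hk
end

section
/- Let G be a finite group. Then D(G) is the smallest positive integer l with the following property: for every finite multiset S over G with |S| >= l and every x in pi(S), there exists a nonempty product-one sub-multiset T of S with |T| <= l and x in pi(S \ T). -/
section Aux

variable {G : Type*} [Group G]

lemma isProductOne_add' {T T' : Multiset G} (h : IsProductOne T) (h' : IsProductOne T') :
    IsProductOne (T + T') := by
  obtain ⟨l, hl, hp⟩ := h
  obtain ⟨l', hl', hp'⟩ := h'
  refine ⟨l ++ l', ?_, by simp [hp, hp']⟩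
  rw [← hl, ← hl']
  simp

lemma isProductOne_listSum {L : List (Multiset G)} (h : ∀ A ∈ L, IsProductOne A) :
    IsProductOne L.sum := by
  induction L with
  | nil => exact ⟨[], rfl, rfl⟩
  | cons B L ih =>
    rw [List.sum_cons]
    exact isProductOne_add' (h B (by simp)) (ih fun A hA => h A (by simp [hA]))

/-- rotation lemma -/
lemma mem_prodSet_iff_cons_inv {x : G} {S : Multiset G} :
    x ∈ prodSet S ↔ (1 : G) ∈ prodSet (x⁻¹ ::ₘ S) := by
  constructor
  · rintro ⟨l, hl, hp⟩
    refine ⟨l ++ [x⁻¹], ?_, by simp [hp]⟩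
    simp [← hl]
  · rintro ⟨m, hm, hp⟩
    have hx : x⁻¹ ∈ m := by
      rw [← Multiset.mem_coe, hm]; exact Multiset.mem_cons_self _ _
    obtain ⟨a, b, rfl⟩ := List.append_of_mem hx
    have hab : ((b ++ a : List G) : Multiset G) = S := by
      have : (a : Multiset G) + (x⁻¹ ::ₘ (b : Multiset G)) = x⁻¹ ::ₘ S := by
        simpa using hm
      rw [show (a : Multiset G) + (x⁻¹ ::ₘ (b : Multiset G))
            = x⁻¹ ::ₘ ((a : Multiset G) + (b : Multiset G)) by
          rw [Multiset.add_cons]] at this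
      rw [Multiset.cons_inj_right] at this
      have hba : ((b ++ a : List G) : Multiset G) = ((a ++ b : List G) : Multiset G) :=
        Multiset.coe_eq_coe.mpr List.perm_append_comm
      rw [hba]
      simpa using this
    refine ⟨b ++ a, hab, ?_⟩
    have hp' : a.prod * x⁻¹ * b.prod = 1 := by simpa [mul_assoc] using hp
    have h2 : (a.prod * x⁻¹)⁻¹ = b.prod := inv_eq_of_mul_eq_one_right hp'
    simp only [List.prod_append]
    rw [← h2]
    group

lemma split_of_long {S : Multiset G} [Finite G] (h1 : IsProductOne S)
    (hc : Nat.card G < Multiset.card S) :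
    ∃ T T' : Multiset G, S = T + T' ∧ T ≠ 0 ∧ T' ≠ 0 ∧ IsProductOne T ∧ IsProductOne T' := by
  obtain ⟨l, hl, hp⟩ := h1
  have hlen : Nat.card G < l.length := by
    rwa [← hl, Multiset.coe_card] at hc
  have := Fintype.ofFinite G
  obtain ⟨i, j, hij, hfij⟩ := Fintype.exists_ne_map_eq_of_card_lt
    (fun i : Fin l.length => (l.take i).prod)
    (by simpa [Nat.card_eq_fintype_card] using hlen)
  wlog hlt : (i : ℕ) < (j : ℕ) generalizing i j
  · exact this j i hij.symm hfij.symm (by omega)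
  set mid : List G := (l.drop i).take (j - i) with hmid
  have htj : l.take j = l.take i ++ mid := by
    rw [hmid, ← List.take_add]
    congr 1
    omega
  have hmidprod : mid.prod = 1 := by
    have h2 : (l.take i).prod * mid.prod = (l.take i).prod * 1 := by
      rw [mul_one, ← List.prod_append, ← htj]; exact hfij.symm
    exact mul_left_cancel h2
  have hrest : ((l.take i ++ l.drop j : List G)).prod = 1 := by
    rw [List.prod_append, hfij]
    have : (l.take j).prod * (l.drop j).prod = 1 := by
      rw [← List.prod_append, List.take_append_drop, hp]
    exact this
  refine ⟨(mid : Multiset G), ((l.take i ++ l.drop j : List G) : Multiset G), ?_, ?_, ?_,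
    ⟨mid, rfl, hmidprod⟩, ⟨_, rfl, hrest⟩⟩
  · rw [← hl]
    have : (l : Multiset G) = ((l.take j ++ l.drop j : List G) : Multiset G) := by
      rw [List.take_append_drop]
    rw [this, htj]
    simp [add_assoc, add_comm, add_left_comm]
    exact List.perm_append_comm.append_left _
  · rw [Ne, Multiset.coe_eq_zero, hmid, ← List.length_eq_zero_iff]
    have : j.val ≤ l.length := le_of_lt j.isLt
    simp only [List.length_take, List.length_drop]
    omega
  · rw [Ne, Multiset.coe_eq_zero, ← List.length_eq_zero_iff]
    simp only [List.length_append, List.length_take, List.length_drop]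
    have : j.val < l.length := j.isLt
    omega

lemma atom_card_le [Finite G] {S : Multiset G} (h : IsMinimalProductOne S) :
    Multiset.card S ≤ Nat.card G := by
  by_contra hc
  exact h.2.2 (split_of_long h.2.1 (by omega))

lemma exists_factorization : ∀ (n : ℕ) (S : Multiset G), Multiset.card S = n → S ≠ 0 →
    IsProductOne S →
    ∃ L : List (Multiset G), (∀ A ∈ L, IsMinimalProductOne A) ∧ L.sum = S := by
  intro n
  induction n using Nat.strong_induction_on with
  | _ n ih =>
    intro S hn h0 h1
    by_cases hm : IsMinimalProductOne S
    · exact ⟨[S], by simpa using hm, by simp⟩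
    · have := hm
      simp only [IsMinimalProductOne, not_and, not_not] at this
      obtain ⟨T, T', hS, hT0, hT'0, hT1, hT'1⟩ := this h0 h1
      have hcT : 0 < Multiset.card T := Multiset.card_pos.mpr hT0
      have hcT' : 0 < Multiset.card T' := Multiset.card_pos.mpr hT'0
      have hcS : Multiset.card T + Multiset.card T' = n := by
        rw [← hn, hS, Multiset.card_add]
      obtain ⟨L1, hL1, hs1⟩ := ih (Multiset.card T) (by omega) T rfl hT0 hT1
      obtain ⟨L2, hL2, hs2⟩ := ih (Multiset.card T') (by omega) T' rfl hT'0 hT'1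
      refine ⟨L1 ++ L2, ?_, by simp [hs1, hs2, hS]⟩
      intro A hA
      rcases List.mem_append.mp hA with h | h
      · exact hL1 A h
      · exact hL2 A h

lemma mem_listSum {α : Type*} {x : α} {L : List (Multiset α)} (h : x ∈ L.sum) :
    ∃ A ∈ L, x ∈ A := by
  induction L with
  | nil => simp at h
  | cons B L ih =>
    rw [List.sum_cons, Multiset.mem_add] at h
    rcases h with h | h
    · exact ⟨B, by simp, h⟩
    · obtain ⟨A, hA, hxA⟩ := ih h
      exact ⟨A, by simp [hA], hxA⟩

lemma atom_one : IsMinimalProductOne ({1} : Multiset G) := by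
  refine ⟨by simp, ⟨[1], by rfl, by simp⟩, ?_⟩
  rintro ⟨T, T', hE, hT, hT', _, _⟩
  have h1 : Multiset.card T + Multiset.card T' = 1 := by
    rw [← Multiset.card_add, ← hE]; simp
  have := Multiset.card_pos.mpr hT
  have := Multiset.card_pos.mpr hT'
  omega

end Aux

/-- `D(G)` is the smallest positive integer `ℓ` such that every multiset `S` over `G` with
`|S| ≥ ℓ` and every `x ∈ π(S)` admits a nonempty product-one sub-multiset `T ≤ S` with
`|T| ≤ ℓ` and `x ∈ π(S - T)`. -/
theorem largeDavenport_isLeast (G : Type*) [Group G] [Finite G] [DecidableEq G] :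
    ∃ ℓ : ℕ, largeDavenport G = (ℓ : ℕ∞) ∧
      IsLeast {l : ℕ | 0 < l ∧ ∀ S : Multiset G, l ≤ S.card → ∀ x ∈ prodSet S,
          ∃ T : Multiset G, T ≤ S ∧ T ≠ 0 ∧ IsProductOne T ∧ T.card ≤ l ∧
            x ∈ prodSet (S - T)} ℓ := by
  classical
  set A : Set ℕ := {n | ∃ S : Multiset G, IsMinimalProductOne S ∧ Multiset.card S = n} with hA
  have h1A : 1 ∈ A := ⟨{1}, atom_one, by simp⟩
  have hbdd : BddAbove A := ⟨Nat.card G, by rintro n ⟨S, hS, rfl⟩; exact atom_card_le hS⟩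
  set ℓ := sSup A with hℓ
  have hmemA : ℓ ∈ A := Nat.sSup_mem ⟨1, h1A⟩ hbdd
  have hpos : 0 < ℓ := lt_of_lt_of_le one_pos (le_csSup hbdd h1A)
  have hcardle : ∀ S : Multiset G, IsMinimalProductOne S → Multiset.card S ≤ ℓ := by
    intro S hS
    exact le_csSup hbdd ⟨S, hS, rfl⟩
  refine ⟨ℓ, ?_, ⟨hpos, ?_⟩, ?_⟩
  · -- largeDavenport G = ℓ
    apply le_antisymm
    · apply sSup_le
      rintro n ⟨S, hS, rfl⟩
      exact_mod_cast hcardle S hS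
    · obtain ⟨S, hS, hc⟩ := hmemA
      exact le_sSup ⟨S, hS, by rw [hc]⟩
  · -- membership
    intro S hcard x hx
    have h1 : (1 : G) ∈ prodSet (x⁻¹ ::ₘ S) := mem_prodSet_iff_cons_inv.mp hx
    obtain ⟨L, hL, hsum⟩ := exists_factorization _ (x⁻¹ ::ₘ S) rfl (by simp) h1
    have hxmem : x⁻¹ ∈ L.sum := by rw [hsum]; exact Multiset.mem_cons_self _ _
    obtain ⟨Am, hAmL, hxAm⟩ := mem_listSum hxmem
    have hperm : L.Perm (Am :: L.erase Am) := List.perm_cons_erase hAmL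
    have hsum2 : Am + (L.erase Am).sum = x⁻¹ ::ₘ S := by
      rw [← hsum, hperm.sum_eq, List.sum_cons]
    -- L.erase Am is nonempty
    obtain ⟨B, L'', hBL⟩ : ∃ B L'', L.erase Am = B :: L'' := by
      cases hE : L.erase Am with
      | nil =>
        exfalso
        rw [hE] at hsum2
        simp only [List.sum_nil, add_zero] at hsum2
        have h1 : Multiset.card Am ≤ ℓ := hcardle Am (hL Am hAmL)
        have h2 : Multiset.card (x⁻¹ ::ₘ S) = Multiset.card S + 1 := by simp
        rw [hsum2, h2] at h1
        omega
      | cons B L'' => exact ⟨B, L'', rfl⟩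
    have hBL' : B ∈ L := hperm.mem_iff.mpr (by simp [hBL])
    have hBatom : IsMinimalProductOne B := hL B hBL'
    have hAmsplit : Am = x⁻¹ ::ₘ Am.erase x⁻¹ := (Multiset.cons_erase hxAm).symm
    have hSeq : S = (Am.erase x⁻¹ + L''.sum) + B := by
      have : x⁻¹ ::ₘ (Am.erase x⁻¹ + (B + L''.sum)) = x⁻¹ ::ₘ S := by
        rw [← hsum2, hBL, List.sum_cons, ← Multiset.cons_add, ← hAmsplit]
      rw [Multiset.cons_inj_right] at this
      rw [← this]
      simp [add_comm, add_left_comm, add_assoc]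
    refine ⟨B, ?_, hBatom.1, hBatom.2.1, hcardle B hBatom, ?_⟩
    · rw [hSeq]; exact Multiset.le_add_left _ _
    · have hST : S - B = Am.erase x⁻¹ + L''.sum := by
        rw [hSeq, add_tsub_cancel_right]
      rw [hST]
      apply mem_prodSet_iff_cons_inv.mpr
      have : x⁻¹ ::ₘ (Am.erase x⁻¹ + L''.sum) = Am + L''.sum := by
        rw [← Multiset.cons_add, ← hAmsplit]
      rw [this]
      exact isProductOne_add' (hL Am hAmL).2.1
        (isProductOne_listSum fun A hA => (hL A (hperm.mem_iff.mpr (by simp [hBL, hA]))).2.1)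
  · -- lower bound
    rintro l ⟨hl0, hl⟩
    by_contra hcon
    push_neg at hcon
    obtain ⟨S, hS, hcS⟩ := hmemA
    obtain ⟨T, hTle, hT0, hT1, hTcard, h1mem⟩ := hl S (by omega) 1 hS.2.1
    have hsub : S - T + T = S := tsub_add_cancel_of_le hTle
    apply hS.2.2
    refine ⟨T, S - T, by rw [add_comm]; exact hsub.symm, hT0, ?_, hT1, h1mem⟩
    · intro h0
      have := Multiset.card_sub hTle
      rw [h0] at this
      simp at this
      omega
end

section
/- Let G = <a, t | a^n = 1, a*t = t*a^r, t^2 = a^e> be a finite group of order 2n presented with parameter r in [1,n], where e in {0, n/2, m} corresponds to the types of groups with a cyclic index-2 subgroup. Then the commutator subgroup [G,G] equals the cyclic subgroup generated by a^{r-1}, and it has order n / gcd(r-1, n). -/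
/-!
Conjugation by `t⁻¹` acts on `⟨a⟩` as `x ↦ x ^ r`, so `⁅a⁻¹, t⁻¹⁆ = a ^ (r - 1)`, and because
`r ^ 2 ≡ 1` it inverts `a ^ (r - 1)`. Hence `⟨a ^ (r - 1)⟩` is a normal subgroup of `[G, G]`, and
modulo it the two generators commute, so the quotient is abelian and `[G, G] = ⟨a ^ (r - 1)⟩`.
-/

open scoped commutatorElement

namespace Subgroup

variable {G : Type*} [Group G]

theorem commutator_le_of_closure_pair_eq_top {a t : G} (hgen : closure {a, t} = ⊤)
    {N : Subgroup G} [N.Normal] (h : ⁅a, t⁆ ∈ N) : _root_.commutator G ≤ N := by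
  rw [← Normal.quotient_commutative_iff_commutator_le]
  have hgenQ : closure {(a : G ⧸ N), (t : G ⧸ N)} = ⊤ := by
    have := (QuotientGroup.mk' N).map_closure {a, t}
    rwa [hgen, map_top_of_surjective _ (QuotientGroup.mk'_surjective N), Set.image_pair,
      eq_comm] at this
  have hcomm : (a : G ⧸ N) * t = t * a := by
    rw [← commutatorElement_eq_one_iff_mul_comm, ← QuotientGroup.mk'_apply,
      ← QuotientGroup.mk'_apply, ← map_commutatorElement, QuotientGroup.mk'_apply,
      QuotientGroup.eq_one_iff]
    exact h
  have : IsMulCommutative (closure {(a : G ⧸ N), (t : G ⧸ N)}) :=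
    isMulCommutative_closure (by
      rintro x (rfl | rfl) y (rfl | rfl) <;> first | rfl | exact hcomm | exact hcomm.symm)
  exact ⟨⟨fun x y => setLike_mul_comm (hgenQ ▸ mem_top x) (hgenQ ▸ mem_top y)⟩⟩

theorem zpowers_normal_of_closure_eq_top {S : Set G} (hS : closure S = ⊤) {b : G}
    (h : ∀ s ∈ S, zpowers (s⁻¹ * b * s) = zpowers b) : (zpowers b).Normal := by
  rw [← normalizer_eq_top_iff, eq_top_iff, ← hS, closure_le]
  intro s hs
  rw [SetLike.mem_coe, ← inv_mem_iff, mem_normalizer_iff_map_conj_eq, MonoidHom.map_zpowers]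
  simpa using h s hs

end Subgroup

section

variable {G : Type*} [Group G] {a t : G} {r : ℕ}

theorem inv_mul_pow_mul_eq_pow_mul (hat : a * t = t * a ^ r) (k : ℕ) :
    t⁻¹ * a ^ k * t = a ^ (r * k) := by
  have hconj : t⁻¹ * a * t = a ^ r := by rw [mul_assoc, hat, inv_mul_cancel_left]
  calc t⁻¹ * a ^ k * t = MulAut.conj t⁻¹ (a ^ k) := by simp
    _ = a ^ (r * k) := by rw [map_pow, MulAut.conj_apply, inv_inv, hconj, pow_mul]

theorem commutatorElement_inv_inv_eq_pow_sub_one (hat : a * t = t * a ^ r) (hr : 1 ≤ r) :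
    ⁅a⁻¹, t⁻¹⁆ = a ^ (r - 1) := by
  calc ⁅a⁻¹, t⁻¹⁆ = a⁻¹ * (t⁻¹ * a ^ 1 * t) := by
        rw [commutatorElement_def, inv_inv, inv_inv, pow_one]; group
    _ = a ^ (r - 1) := by
      rw [inv_mul_pow_mul_eq_pow_mul hat, mul_one, inv_mul_eq_iff_eq_mul, ← pow_succ',
        Nat.sub_add_cancel hr]

theorem inv_mul_pow_sub_one_mul (hat : a * t = t * a ^ r) (hr : orderOf a ∣ r ^ 2 - 1) :
    t⁻¹ * a ^ (r - 1) * t = (a ^ (r - 1))⁻¹ := by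
  rw [inv_mul_pow_mul_eq_pow_mul hat, eq_inv_iff_mul_eq_one, ← pow_add,
    ← orderOf_dvd_iff_pow_eq_one]
  rwa [← one_pow 2, Nat.sq_sub_sq, add_one_mul] at hr

end

theorem commutator_of_cyclic_index_two_general {G : Type*} [Group G] [Finite G]
    (a t : G) (n r : ℕ)
    (hgen : Subgroup.closure {a, t} = ⊤)
    (horder : orderOf a = n)
    (hr1 : 1 ≤ r) (hr2 : r ^ 2 ≡ 1 [MOD n])
    (hat : a * t = t * a ^ r) :
    commutator G = Subgroup.zpowers (a ^ (r - 1)) ∧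
      Nat.card (commutator G) = n / Nat.gcd (r - 1) n := by
  have hdvd : orderOf a ∣ r ^ 2 - 1 :=
    horder ▸ (Nat.modEq_iff_dvd' (Nat.one_le_pow _ _ hr1)).mp hr2.symm
  have hcomm := commutatorElement_inv_inv_eq_pow_sub_one hat hr1
  have hN : (Subgroup.zpowers (a ^ (r - 1))).Normal := by
    refine Subgroup.zpowers_normal_of_closure_eq_top hgen ?_
    rintro s (rfl | rfl)
    · rw [show s⁻¹ * s ^ (r - 1) * s = s ^ (r - 1) by group]
    · rw [inv_mul_pow_sub_one_mul hat hdvd, Subgroup.zpowers_inv]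
  have heq : commutator G = Subgroup.zpowers (a ^ (r - 1)) := by
    refine le_antisymm (Subgroup.commutator_le_of_closure_pair_eq_top hgen ?_) ?_
    · rw [show ⁅a, t⁆ = a * t * ⁅a⁻¹, t⁻¹⁆ * (a * t)⁻¹ by group, hcomm]
      exact hN.conj_mem _ (Subgroup.mem_zpowers _) _
    · rw [Subgroup.zpowers_le, ← hcomm, commutator_def]
      exact Subgroup.commutator_mem_commutator (Subgroup.mem_top _) (Subgroup.mem_top _)
  refine ⟨heq, ?_⟩
  rw [heq, Nat.card_zpowers, orderOf_pow, horder, Nat.gcd_comm]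

/-- For a finite group `G = ⟨a, t⟩` of order `2n` with `a` of order `n`,
`a * t = t * a ^ r` and `t ^ 2 = a ^ e` where `e ∈ {0, n/2, m}` (with `n = 2 ^ s * m`,
`m` odd), the commutator subgroup equals `⟨a ^ (r - 1)⟩` and has order `n / gcd (r-1, n)`. -/
theorem commutator_of_cyclic_index_two {G : Type*} [Group G] [Finite G]
    (a t : G) (n r e s m : ℕ)
    (hgen : Subgroup.closure {a, t} = ⊤)
    (horder : orderOf a = n) (hcard : Nat.card G = 2 * n)
    (hnm : n = 2 ^ s * m) (hm : Odd m)
    (hr1 : 1 ≤ r) (hrn : r ≤ n) (hr2 : r ^ 2 ≡ 1 [MOD n])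
    (hat : a * t = t * a ^ r)
    (ht : t ^ 2 = a ^ e) (he : e = 0 ∨ n = 2 * e ∨ e = m) :
    commutator G = Subgroup.zpowers (a ^ (r - 1)) ∧
      Nat.card (commutator G) = n / Nat.gcd (r - 1) n :=
  commutator_of_cyclic_index_two_general a t n r hgen horder hr1 hr2 hat
end

section
/- Let G = <a, t | a^n = 1, a*t = t*a^r, t^2 = a^e> with r in [1,n], r != 1, be a finite non-abelian group of order 2n with cyclic index-2 subgroup <a>. Then the center Z(G) equals <a^{n^+}>, where n^+ = n / gcd(r-1, n); in particular |Z(G)| = gcd(r-1, n). -/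
/-!
Since `t⁻¹ a t = a ^ r`, a power `a ^ k` commutes with `t` exactly when `n ∣ (r - 1) k`, i.e. when
`n⁺ ∣ k`. No element outside `⟨a⟩` is central: it would be `t` times a power of `a`, and then `t`
would commute with `a`, forcing `r ≡ 1 [MOD n]`. So `Z(G) = ⟨a ^ n⁺⟩`, of order `n / n⁺ = n⁻`.
-/

open Subgroup

theorem Nat.dvd_mul_iff_div_gcd_dvd {n s : ℕ} (hn : n ≠ 0) (k : ℕ) :
    n ∣ s * k ↔ n / s.gcd n ∣ k := by
  obtain ⟨s', n', hcop, hs, hn'⟩ := Nat.exists_coprime s n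
  set d := s.gcd n
  have hd : 0 < d := Nat.gcd_pos_of_pos_right s (Nat.pos_of_ne_zero hn)
  rw [Nat.div_eq_of_eq_mul_left hd hn', ← hcop.symm.dvd_mul_left, hs, hn', mul_right_comm,
    Nat.mul_dvd_mul_iff_right hd]

section

variable {G : Type*} [Group G]

theorem center_eq_centralizer_of_closure_eq_top {s : Set G} (h : closure s = ⊤) :
    center G = centralizer s := by
  rw [← centralizer_univ, ← coe_top, ← h, centralizer_closure]

theorem pow_mem_zpowers_pow_iff {a : G} {m : ℕ} (hm : m ∣ orderOf a) (k : ℕ) :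
    a ^ k ∈ zpowers (a ^ m) ↔ m ∣ k := by
  constructor
  · intro h
    obtain ⟨j, hj⟩ := mem_zpowers_iff.mp h
    rw [← zpow_natCast, ← zpow_mul, ← zpow_natCast a k, zpow_eq_zpow_iff_modEq] at hj
    exact Int.natCast_dvd_natCast.mp <|
      (Int.dvd_iff_dvd_of_dvd_sub ((Int.natCast_dvd_natCast.mpr hm).trans hj.dvd)).mpr
        (dvd_mul_right _ _)
  · rintro ⟨j, rfl⟩
    exact ⟨j, by simp [pow_mul]⟩

theorem pow_mul_eq_mul_pow_mul {a t : G} {r : ℕ} (hat : a * t = t * a ^ r) (k : ℕ) :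
    a ^ k * t = t * a ^ (r * k) := by
  rw [pow_mul]
  exact ((SemiconjBy.pow_right hat.symm k).eq).symm

theorem commute_pow_iff {a t : G} {r : ℕ} (hr : 1 ≤ r) (hat : a * t = t * a ^ r) (k : ℕ) :
    Commute (a ^ k) t ↔ orderOf a ∣ (r - 1) * k := by
  rw [Commute, SemiconjBy, pow_mul_eq_mul_pow_mul hat, mul_right_inj, orderOf_dvd_iff_pow_eq_one]
  have hrk : r * k = (r - 1) * k + k := by
    conv_lhs => rw [← Nat.sub_add_cancel hr]
    ring
  rw [hrk, pow_add, mul_eq_right, eq_comm]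

theorem pow_mem_center_iff {a t : G} {r : ℕ} (hgen : closure {a, t} = ⊤) (hr : 1 ≤ r)
    (hat : a * t = t * a ^ r) (k : ℕ) : a ^ k ∈ center G ↔ orderOf a ∣ (r - 1) * k := by
  rw [center_eq_centralizer_of_closure_eq_top hgen, mem_centralizer_iff, ← commute_pow_iff hr hat]
  simp only [Set.forall_mem_insert, Set.mem_singleton_iff, forall_eq, (Commute.self_pow a k).eq,
    true_and]
  exact eq_comm

theorem center_le_zpowers_of_index_two {a t : G} (hidx : (zpowers a).index = 2)
    (hat : ¬ Commute a t) : center G ≤ zpowers a := by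
  intro z hz
  by_contra hza
  have ht : t ∉ zpowers a := fun ⟨k, hk⟩ => hat (hk ▸ Commute.self_zpow a k)
  obtain ⟨k, hk⟩ : z⁻¹ * t ∈ zpowers a :=
    (mul_mem_iff_of_index_two hidx).mpr (iff_of_false (inv_mem_iff.not.mpr hza) ht)
  have htz : t = z * a ^ k := by simp only at hk; rw [hk, mul_inv_cancel_left]
  have haz : Commute a z := mem_center_iff.mp hz a
  exact hat (htz ▸ haz.mul_right (Commute.self_zpow a k))

theorem center_eq_zpowers_pow {a t : G} {r : ℕ} (ha : IsOfFinOrder a)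
    (hgen : closure {a, t} = ⊤) (hidx : (zpowers a).index = 2) (hr : 1 ≤ r)
    (hat : a * t = t * a ^ r) (hcomm : ¬ Commute a t) :
    center G = zpowers (a ^ (orderOf a / (r - 1).gcd (orderOf a))) := by
  set m := orderOf a / (r - 1).gcd (orderOf a)
  have key (k : ℕ) : a ^ k ∈ center G ↔ a ^ k ∈ zpowers (a ^ m) := by
    rw [pow_mem_center_iff hgen hr hat, pow_mem_zpowers_pow_iff (Nat.div_dvd_of_dvd
      (Nat.gcd_dvd_right _ _)), Nat.dvd_mul_iff_div_gcd_dvd ha.orderOf_pos.ne']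
  refine le_antisymm (fun g hg => ?_) (zpowers_le.mpr ((key m).mpr (mem_zpowers _)))
  obtain ⟨k, rfl⟩ :=
    ha.mem_powers_iff_mem_zpowers.mpr (center_le_zpowers_of_index_two hidx hcomm hg)
  exact (key k).mp hg

end

theorem center_of_cyclic_index_two_general {G : Type*} [Group G]
    (a t : G) (n r : ℕ)
    (hgen : Subgroup.closure {a, t} = ⊤)
    (horder : orderOf a = n) (hcard : Nat.card G = 2 * n)
    (hr1 : 1 ≤ r) (hrn : r ≤ n) (hrne : r ≠ 1)
    (hat : a * t = t * a ^ r) :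
    Subgroup.center G = Subgroup.zpowers (a ^ (n / Nat.gcd (r - 1) n)) ∧
      Nat.card (Subgroup.center G) = Nat.gcd (r - 1) n := by
  subst horder
  have hfin : IsOfFinOrder a := orderOf_pos_iff.mp (by omega)
  have hidx : (zpowers a).index = 2 := by
    have := index_mul_card (zpowers a)
    rw [Nat.card_zpowers, hcard] at this
    exact Nat.eq_of_mul_eq_mul_right hfin.orderOf_pos this
  have hcomm : ¬ Commute a t := by
    rw [← pow_one a, commute_pow_iff hr1 hat, mul_one]
    exact Nat.not_dvd_of_pos_of_lt (by omega) (by omega)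
  have hcenter := center_eq_zpowers_pow hfin hgen hidx hr1 hat hcomm
  refine ⟨hcenter, ?_⟩
  rw [hcenter, Nat.card_zpowers,
    orderOf_pow_orderOf_div hfin.orderOf_pos.ne' (Nat.gcd_dvd_right _ _)]

/-- For a finite non-abelian group `G = ⟨a, t⟩` of order `2n` with `a` of order `n`,
`a * t = t * a ^ r` with `r ≠ 1`, and `t ^ 2` a power of `a`, the center of `G` equals
`⟨a ^ (n⁺)⟩` where `n⁺ = n / gcd (r-1, n)`; in particular `|Z(G)| = gcd (r-1, n)`. -/
theorem center_of_cyclic_index_two {G : Type*} [Group G] [Finite G]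
    (a t : G) (n r : ℕ)
    (hgen : Subgroup.closure {a, t} = ⊤)
    (horder : orderOf a = n) (hcard : Nat.card G = 2 * n)
    (hr1 : 1 ≤ r) (hrn : r ≤ n) (hr2 : r ^ 2 ≡ 1 [MOD n]) (hrne : r ≠ 1)
    (hat : a * t = t * a ^ r)
    (ht : ∃ e : ℕ, t ^ 2 = a ^ e) :
    Subgroup.center G = Subgroup.zpowers (a ^ (n / Nat.gcd (r - 1) n)) ∧
      Nat.card (Subgroup.center G) = Nat.gcd (r - 1) n :=
  center_of_cyclic_index_two_general a t n r hgen horder hcard hr1 hrn hrne hat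
end

section
/- Let G be a cyclic group of order 2p with p prime, let x in G be the unique element of order 2, and let S be a multiset over G of even length |S| >= 2p + 4. Suppose S = T_1 + T_2 (disjoint union of multisets) with |T_1| = |T_2| = |S|/2 and sigma(T_1) - sigma(T_2) = |T_1| * x. Then there is a partition S = U_1 + U_2 + V_1 + V_2 into four nonempty multisets with |U_1| = |U_2|, |V_1| = |V_2|, sigma(U_1) - sigma(U_2) = |U_1| * x, and sigma(V_1) - sigma(V_2) = |V_1| * x. -/
open Multiset
open scoped Classical

namespace SplitBF
variable {γ β : Type*}

variable {γ : Type*}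

lemma exists_le_card (s : Multiset γ) : ∀ t : ℕ, t ≤ Multiset.card s →
    ∃ u, u ≤ s ∧ Multiset.card u = t := by
  induction s using Multiset.induction_on with
  | empty => intro t ht; simp at ht; exact ⟨0, le_refl _, by simp [ht]⟩
  | cons a s ih =>
    intro t ht
    cases t with
    | zero => exact ⟨0, Multiset.zero_le _, rfl⟩
    | succ t =>
      simp only [Multiset.card_cons] at ht
      obtain ⟨u, hu, hcard⟩ := ih t (by omega)
      exact ⟨a ::ₘ u, Multiset.cons_le_cons a hu, by simp [hcard]⟩

lemma exists_two_le_count [DecidableEq γ] (s : Multiset γ) (h : s.toFinset.card < Multiset.card s) :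
    ∃ a, 2 ≤ s.count a := by
  by_contra hc
  push_neg at hc
  have : Multiset.card s ≤ s.toFinset.card := by
    calc Multiset.card s = ∑ a ∈ s.toFinset, s.count a := (Multiset.toFinset_sum_count_eq s).symm
    _ ≤ ∑ _a ∈ s.toFinset, 1 := Finset.sum_le_sum (fun a _ => by have := hc a; omega)
    _ = s.toFinset.card := by simp
  omega


variable {γ : Type*}

/-- subset-sum set -/
noncomputable def SS {p : ℕ} [NeZero p] (f : γ → ZMod p) (M : Multiset γ) : Finset (ZMod p) :=
  Finset.univ.filter (fun z => ∃ J, J ≤ M ∧ (J.map f).sum = z)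

lemma mem_SS {p : ℕ} [NeZero p] (f : γ → ZMod p) (M : Multiset γ) (z : ZMod p) :
    z ∈ SS f M ↔ ∃ J, J ≤ M ∧ (J.map f).sum = z := by
  simp [SS]

lemma olson {p : ℕ} (hp : p.Prime) (f : γ → ZMod p) (M : Multiset γ)
    (hf : ∀ a ∈ M, f a ≠ 0) (hc : p - 1 ≤ Multiset.card M) (c : ZMod p) :
    ∃ J, J ≤ M ∧ (J.map f).sum = c := by
  haveI : NeZero p := ⟨hp.ne_zero⟩
  haveI : Fact p.Prime := ⟨hp⟩
  suffices h : ∀ (M : Multiset γ), (∀ a ∈ M, f a ≠ 0) →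
      min p (Multiset.card M + 1) ≤ (SS f M).card by
    have hcard : p ≤ (SS f M).card := by
      have h1 := h M hf
      have h2 : p ≤ Multiset.card M + 1 := by omega
      rwa [min_eq_left h2] at h1
    have : SS f M = Finset.univ := by
      apply Finset.eq_univ_of_card
      have : (SS f M).card ≤ Fintype.card (ZMod p) := Finset.card_le_univ _
      rw [ZMod.card] at this ⊢
      omega
    have : c ∈ SS f M := by rw [this]; exact Finset.mem_univ c
    rwa [mem_SS] at this
  clear hc hf
  intro M
  induction M using Multiset.induction_on with
  | empty =>
    intro _
    have h0 : (0 : ZMod p) ∈ SS f 0 := by rw [mem_SS]; exact ⟨0, le_refl _, by simp⟩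
    have : 1 ≤ (SS f 0).card := Finset.card_pos.2 ⟨0, h0⟩
    simp only [Multiset.card_zero]
    omega
  | cons a M ih =>
    intro hf
    have hfa : f a ≠ 0 := hf a (Multiset.mem_cons_self a M)
    have hf' : ∀ b ∈ M, f b ≠ 0 := fun b hb => hf b (Multiset.mem_cons_of_mem hb)
    have hmono : SS f M ⊆ SS f (a ::ₘ M) := by
      intro z hz
      rw [mem_SS] at hz ⊢
      obtain ⟨J, hJ, hs⟩ := hz
      exact ⟨J, le_trans hJ (Multiset.le_cons_self M a), hs⟩
    by_cases hbig : p ≤ (SS f M).card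
    · have := Finset.card_le_card hmono
      simp only [Multiset.card_cons]
      omega
    · -- find z in SS f M with z + f a ∉ SS f M
      have hz : ∃ z ∈ SS f M, z + f a ∉ SS f M := by
        by_contra hcl
        push_neg at hcl
        -- closure: SS f M = univ
        have hstep : ∀ n : ℕ, ((n : ZMod p) * f a) ∈ SS f M := by
          intro n
          induction n with
          | zero => simp; rw [mem_SS]; exact ⟨0, Multiset.zero_le _, by simp⟩
          | succ n ihn =>
            have := hcl _ ihn
            convert this using 1
            push_cast
            ring
        have huniv : ∀ z : ZMod p, z ∈ SS f M := by
          intro z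
          have := hstep (z * (f a)⁻¹).val
          rwa [ZMod.natCast_zmod_val, inv_mul_cancel_right₀ hfa] at this
        have : Fintype.card (ZMod p) ≤ (SS f M).card := by
          apply Finset.card_le_card
          intro z _; exact huniv z
        rw [ZMod.card] at this
        omega
      obtain ⟨z, hzmem, hznot⟩ := hz
      have hins : insert (z + f a) (SS f M) ⊆ SS f (a ::ₘ M) := by
        intro y hy
        rcases Finset.mem_insert.1 hy with h | h
        · subst h
          rw [mem_SS] at hzmem ⊢
          obtain ⟨J, hJ, hs⟩ := hzmem
          exact ⟨a ::ₘ J, Multiset.cons_le_cons a hJ, by simp [hs]; ring⟩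
        · exact hmono h
      have hcard : (SS f M).card + 1 ≤ (SS f (a ::ₘ M)).card := by
        have := Finset.card_le_card hins
        rwa [Finset.card_insert_of_notMem hznot] at this
      have := ih hf'
      simp only [Multiset.card_cons]
      omega



lemma filter_eq_filter_ne [DecidableEq β] {f : γ → β} {b c : β} (h : c ≠ b) (V : Multiset γ) :
    (V.filter (fun a => f a ≠ b)).filter (fun a => f a = c) = V.filter (fun a => f a = c) := by
  rw [Multiset.filter_filter]
  apply Multiset.filter_congr
  intro x _
  constructor
  · rintro ⟨h1, _⟩; exact h1
  · intro h1; exact ⟨h1, by rw [h1]; exact h⟩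

lemma card_filter_partition (p : γ → Prop) [DecidablePred p] (V : Multiset γ) :
    Multiset.card (V.filter p) + Multiset.card (V.filter (fun a => ¬ p a)) = Multiset.card V := by
  rw [← Multiset.card_add, Multiset.filter_add_not]

lemma cnt_three_le [DecidableEq β] {f : γ → β} {b₁ b₂ b₃ : β} (h12 : b₁ ≠ b₂) (h13 : b₁ ≠ b₃) (h23 : b₂ ≠ b₃)
    (V : Multiset γ) :
    Multiset.card (V.filter (fun a => f a = b₁)) + Multiset.card (V.filter (fun a => f a = b₂))
      + Multiset.card (V.filter (fun a => f a = b₃)) ≤ Multiset.card V := by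
  have e1 := card_filter_partition (fun a => f a = b₁) V
  set M := V.filter (fun a => f a ≠ b₁) with hM
  have e2 : Multiset.card (M.filter (fun a => f a = b₂))
      + Multiset.card (M.filter (fun a => ¬ (f a = b₂))) = Multiset.card M :=
    card_filter_partition _ M
  have e3 : Multiset.card ((M.filter (fun a => ¬ (f a = b₂))).filter (fun a => f a = b₃))
      ≤ Multiset.card (M.filter (fun a => ¬ (f a = b₂))) :=
    Multiset.card_le_card (Multiset.filter_le _ _)
  have r2 : M.filter (fun a => f a = b₂) = V.filter (fun a => f a = b₂) :=
    filter_eq_filter_ne h12.symm V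
  have r3 : (M.filter (fun a => ¬ (f a = b₂))).filter (fun a => f a = b₃)
      = V.filter (fun a => f a = b₃) := by
    rw [Multiset.filter_filter, hM, Multiset.filter_filter]
    apply Multiset.filter_congr
    intro x _
    constructor
    · intro h; tauto
    · intro h1
      have e3' : f x ≠ b₂ := by rw [h1]; exact h23.symm
      have e1' : f x ≠ b₁ := by rw [h1]; exact h13.symm
      tauto
  rw [r2] at e2
  rw [r3] at e3
  omega

lemma pairs [DecidableEq β] (f : γ → β) : ∀ (l : ℕ) (V : Multiset γ), Multiset.card V = 2*l →
    (∀ b, Multiset.card (V.filter (fun a => f a = b)) ≤ l) →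
    ∃ L : Multiset (γ × γ), Multiset.card L = l ∧
      L.map Prod.fst + L.map Prod.snd = V ∧ ∀ pr ∈ L, f pr.1 ≠ f pr.2 := by
  intro l
  induction l with
  | zero =>
    intro V hV _
    rw [mul_zero, Multiset.card_eq_zero] at hV
    exact ⟨0, rfl, by simp [hV], by simp⟩
  | succ l ih =>
    intro V hV hmax
    -- pick x in a maximal class
    have hVne : V ≠ 0 := by
      intro h; rw [h] at hV; simp at hV
    have htne : V.toFinset.Nonempty := by
      obtain ⟨a, ha⟩ := Multiset.exists_mem_of_ne_zero hVne
      exact ⟨a, Multiset.mem_toFinset.2 ha⟩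
    have himne : (V.toFinset.image f).Nonempty := htne.image f
    obtain ⟨b₁, hb₁mem, hb₁max⟩ := Finset.exists_max_image (V.toFinset.image f)
      (fun b => Multiset.card (V.filter (fun a => f a = b))) himne
    have hb₁max' : ∀ b, Multiset.card (V.filter (fun a => f a = b))
        ≤ Multiset.card (V.filter (fun a => f a = b₁)) := by
      intro b
      by_cases hb : b ∈ V.toFinset.image f
      · exact hb₁max b hb
      · have : V.filter (fun a => f a = b) = 0 := by
          rw [Multiset.filter_eq_nil]
          intro a ha hfa
          exact hb (Finset.mem_image.2 ⟨a, Multiset.mem_toFinset.2 ha, hfa⟩)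
        simp [this]
    obtain ⟨x, hxV, hfx⟩ : ∃ x, x ∈ V ∧ f x = b₁ := by
      obtain ⟨a, ha, hfa⟩ := Finset.mem_image.1 hb₁mem
      exact ⟨a, Multiset.mem_toFinset.1 ha, hfa⟩
    -- minority
    set M := V.filter (fun a => f a ≠ b₁) with hMdef
    have hMcard : Multiset.card (V.filter (fun a => f a = b₁)) + Multiset.card M
        = Multiset.card V := card_filter_partition _ V
    have hMne : M ≠ 0 := by
      intro h
      have := hmax b₁
      rw [h] at hMcard
      simp at hMcard
      omega
    have htne2 : M.toFinset.Nonempty := by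
      obtain ⟨a, ha⟩ := Multiset.exists_mem_of_ne_zero hMne
      exact ⟨a, Multiset.mem_toFinset.2 ha⟩
    obtain ⟨b₂, hb₂mem, hb₂max⟩ := Finset.exists_max_image (M.toFinset.image f)
      (fun b => Multiset.card (V.filter (fun a => f a = b))) (htne2.image f)
    obtain ⟨y, hyM, hfy⟩ : ∃ y, y ∈ M ∧ f y = b₂ := by
      obtain ⟨a, ha, hfa⟩ := Finset.mem_image.1 hb₂mem
      exact ⟨a, Multiset.mem_toFinset.1 ha, hfa⟩
    have hyV : y ∈ V := Multiset.mem_of_mem_filter hyM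
    have hb₂ne : b₂ ≠ b₁ := by
      have hyM' := hyM
      rw [hMdef] at hyM'
      have : f y ≠ b₁ := (Multiset.mem_filter.1 hyM').2
      rw [← hfy]; exact this
    have hb₂max' : ∀ b, b ≠ b₁ → Multiset.card (V.filter (fun a => f a = b))
        ≤ Multiset.card (V.filter (fun a => f a = b₂)) := by
      intro b hb
      by_cases hbm : b ∈ M.toFinset.image f
      · exact hb₂max b hbm
      · have : V.filter (fun a => f a = b) = 0 := by
          rw [Multiset.filter_eq_nil]
          intro a ha hfa
          apply hbm
          have haM : a ∈ M := by
            rw [hMdef, Multiset.mem_filter]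
            exact ⟨ha, by rw [hfa]; exact hb⟩
          exact Finset.mem_image.2 ⟨a, Multiset.mem_toFinset.2 haM, hfa⟩
        simp [this]
    have hxy : y ≠ x := by
      intro h
      apply hb₂ne
      rw [← hfy, h, hfx]
    -- V = x ::ₘ y ::ₘ V'
    have hyV' : y ∈ V.erase x := Multiset.mem_erase_of_ne hxy |>.2 hyV
    set V' := (V.erase x).erase y with hV'def
    have hdecomp : V = x ::ₘ y ::ₘ V' := by
      rw [hV'def, Multiset.cons_erase hyV', Multiset.cons_erase hxV]
    have hV'card : Multiset.card V' = 2 * l := by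
      have : Multiset.card V = Multiset.card V' + 2 := by rw [hdecomp]; simp; try omega
      omega
    -- count relation
    have hcnt : ∀ b, Multiset.card (V.filter (fun a => f a = b)) =
        Multiset.card (V'.filter (fun a => f a = b))
        + (if f x = b then 1 else 0) + (if f y = b then 1 else 0) := by
      intro b
      rw [hdecomp, Multiset.filter_cons, Multiset.filter_cons]
      simp only [Multiset.card_add]
      by_cases h1 : f x = b <;> by_cases h2 : f y = b <;> simp [h1, h2] <;> omega
    have hmax' : ∀ b, Multiset.card (V'.filter (fun a => f a = b)) ≤ l := by
      intro b
      by_cases hb1 : b = b₁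
      · have h1 := hcnt b
        have h2 := hmax b
        have hx1 : f x = b := by rw [hfx, hb1]
        have hy1 : f y ≠ b := by rw [hfy, hb1]; exact hb₂ne
        rw [if_pos hx1, if_neg hy1] at h1
        omega
      · by_cases hb2 : b = b₂
        · have h1 := hcnt b
          have h2 := hmax b
          have hx1 : f x ≠ b := by rw [hfx, hb2]; exact fun h => hb₂ne h.symm
          have hy1 : f y = b := by rw [hfy, hb2]
          rw [if_neg hx1, if_pos hy1] at h1
          omega
        · -- b ∉ {b₁, b₂}
          have h1 := hcnt b
          have h2 : f x ≠ b := by rw [hfx]; exact fun h => hb1 h.symm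
          have h3 : f y ≠ b := by rw [hfy]; exact fun h => hb2 h.symm
          rw [if_neg h2, if_neg h3] at h1
          by_contra hcon
          push_neg at hcon
          have hble : l + 1 ≤ Multiset.card (V.filter (fun a => f a = b)) := by omega
          have hc1 := hb₁max' b
          have hc2 := hb₂max' b (fun h => hb1 h)
          have h3 := cnt_three_le (f := f) (b₁ := b₁) (b₂ := b₂) (b₃ := b)
            (fun h => hb₂ne h.symm) (fun h => hb1 h.symm) (fun h => hb2 h.symm) V
          omega
    obtain ⟨L', hL'card, hL'eq, hL'ne⟩ := ih V' hV'card hmax'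
    refine ⟨(x, y) ::ₘ L', by simp [hL'card], ?_, ?_⟩
    · rw [hdecomp, ← hL'eq]
      simp only [Multiset.map_cons, Multiset.cons_add, Multiset.add_cons]
      rw [Multiset.cons_swap]
    · intro pr hpr
      rcases Multiset.mem_cons.1 hpr with h | h
      · subst h
        simp only
        rw [hfx, hfy]
        exact fun h => hb₂ne h.symm
      · exact hL'ne pr h




lemma sum_map_eq_card_nsmul {M : Type*} [AddCommMonoid M] (s : Multiset γ) (g : γ → M) (b : M)
    (h : ∀ a ∈ s, g a = b) : (s.map g).sum = Multiset.card s • b := by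
  have : s.map g = Multiset.replicate (Multiset.card s) b := by
    rw [Multiset.eq_replicate]
    constructor
    · rw [Multiset.card_map]
    · intro x hx
      obtain ⟨a, ha, rfl⟩ := Multiset.mem_map.1 hx
      exact h a ha
  rw [this, Multiset.sum_replicate]


lemma allc {p : ℕ} (hp : p.Prime) (w : γ → ZMod p) (V : Multiset γ) (l : ℕ)
    (hl : p - 1 ≤ l) (hcard : Multiset.card V = 2 * l)
    (hmin : ∀ b : ZMod p, p - 1 ≤ Multiset.card (V.filter (fun s => w s ≠ b)))
    (c : ZMod p) : ∃ P, P ≤ V ∧ Multiset.card P = l ∧ (P.map w).sum = c := by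
  by_cases hN : ∃ b₀ : ZMod p, l + 1 ≤ Multiset.card (V.filter (fun s => w s = b₀))
  · obtain ⟨b₀, hb₀⟩ := hN
    set M := V.filter (fun s => w s ≠ b₀) with hMdef
    have hpart : Multiset.card (V.filter (fun s => w s = b₀)) + Multiset.card M
        = Multiset.card V := by
      rw [hMdef, ← Multiset.card_add, Multiset.filter_add_not]
    have hMle : Multiset.card M + 1 ≤ l := by omega
    have hMge : p - 1 ≤ Multiset.card M := hmin b₀
    obtain ⟨J, hJM, hJsum⟩ := olson hp (fun s => w s - b₀) M
      (fun a ha => by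
        rw [hMdef] at ha
        exact sub_ne_zero.2 (Multiset.mem_filter.1 ha).2)
      hMge (c - (l : ZMod p) * b₀)
    have hJcard : Multiset.card J ≤ l := le_trans (Multiset.card_le_card hJM) (by omega)
    obtain ⟨E, hEle, hEcard⟩ := exists_le_card (V.filter (fun s => w s = b₀)) (l - Multiset.card J)
      (by omega)
    refine ⟨J + E, ?_, ?_, ?_⟩
    · calc J + E ≤ M + V.filter (fun s => w s = b₀) := add_le_add hJM hEle
      _ = V := by rw [hMdef, add_comm, Multiset.filter_add_not]
    · rw [Multiset.card_add, hEcard]; omega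
    · rw [Multiset.map_add, Multiset.sum_add]
      have hE : (E.map w).sum = (Multiset.card E) • b₀ := by
        apply sum_map_eq_card_nsmul
        intro a ha
        have := Multiset.mem_of_le hEle ha
        exact (Multiset.mem_filter.1 this).2
      have hJ : (J.map w).sum = (c - (l : ZMod p) * b₀) + (Multiset.card J) • b₀ := by
        have : J.map w = J.map (fun s => (w s - b₀) + b₀) := by
          apply Multiset.map_congr rfl
          intro a _; ring
        rw [this, Multiset.sum_map_add, hJsum]
        congr 1
        apply sum_map_eq_card_nsmul
        intro a _; rfl
      rw [hE, hJ, hEcard]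
      have hcast : ((l - Multiset.card J : ℕ) : ZMod p) = (l : ZMod p) - (Multiset.card J : ℕ) :=
        Nat.cast_sub hJcard
      rw [nsmul_eq_mul, nsmul_eq_mul, hcast]
      ring
  · push_neg at hN
    obtain ⟨L, hLcard, hLeq, hLne⟩ := pairs w l V hcard (fun b => by
      have h := hN b
      have he : V.filter (fun a => w a = b) = V.filter (fun s => w s = b) :=
        Multiset.filter_congr (fun x _ => Iff.rfl)
      rw [he]; omega)
    obtain ⟨K, hKL, hKsum⟩ := olson hp (fun pr => w pr.2 - w pr.1) L
      (fun pr hpr => sub_ne_zero.2 (fun h => hLne pr hpr h.symm))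
      (by omega) (c - (L.map (fun pr => w pr.1)).sum)
    have hLK : L = K + (L - K) := (add_tsub_cancel_of_le hKL).symm
    refine ⟨K.map Prod.snd + (L - K).map Prod.fst, ?_, ?_, ?_⟩
    · calc K.map Prod.snd + (L - K).map Prod.fst
          ≤ L.map Prod.snd + L.map Prod.fst :=
            add_le_add (Multiset.map_le_map hKL) (Multiset.map_le_map (tsub_le_self))
      _ = V := by rw [add_comm, hLeq]
    · rw [Multiset.card_add, Multiset.card_map, Multiset.card_map, Multiset.card_sub hKL]
      have := Multiset.card_le_card hKL
      omega
    · rw [Multiset.map_add, Multiset.sum_add]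
      have h1 : ((K.map Prod.snd).map w).sum
          = (K.map (fun pr => w pr.2 - w pr.1)).sum + (K.map (fun pr => w pr.1)).sum := by
        rw [Multiset.map_map, ← Multiset.sum_map_add]
        apply congrArg
        apply Multiset.map_congr rfl
        intro a _
        show w a.2 = w a.2 - w a.1 + w a.1
        ring
      have h2 : (((L - K).map Prod.fst).map w).sum
          = (L.map (fun pr => w pr.1)).sum - (K.map (fun pr => w pr.1)).sum := by
        rw [Multiset.map_map]
        have hfe : (L - K).map (w ∘ Prod.fst) = (L - K).map (fun pr => w pr.1) :=
          Multiset.map_congr rfl (fun a _ => rfl)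
        rw [hfe, eq_sub_iff_add_eq]
        conv_rhs => rw [hLK]
        rw [Multiset.map_add, Multiset.sum_add]
        ring
      rw [h1, h2, hKsum]
      ring

section GroupHelpers
variable {G : Type*} [AddCommGroup G]

lemma pair_pair_le [DecidableEq G] {a c : G} {S : Multiset G}
    (h : 2 ≤ S.count a ∧ 2 ≤ S.count c ∧ a ≠ c ∨ 4 ≤ S.count a ∧ a = c) :
    ({a, c} : Multiset G) + {a, c} ≤ S := by
  rw [Multiset.le_iff_count]
  intro e
  have key : Multiset.count e (({a, c} : Multiset G) + {a, c})
      = 2 * ((if e = a then 1 else 0) + (if e = c then 1 else 0)) := by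
    simp [Multiset.count_add, Multiset.count_cons, Multiset.count_singleton]
    ring
  rw [key]
  rcases h with ⟨ha, hc, hac⟩ | ⟨ha, rfl⟩
  · by_cases h1 : e = a
    · subst h1
      rw [if_pos rfl, if_neg hac]
      omega
    · by_cases h2 : e = c
      · subst h2
        rw [if_neg (fun hh => hac hh.symm), if_pos rfl]
        omega
      · rw [if_neg h1, if_neg h2]
        omega
  · by_cases h1 : e = a
    · subst h1
      rw [if_pos rfl]
      omega
    · rw [if_neg h1]
      omega

lemma class_toFinset_le [DecidableEq G] {x : G} (W : Multiset G)
    (hne : W ≠ 0)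
    (hcl : ∀ u ∈ W, ∀ u' ∈ W, u = u' ∨ u = u' + x) : W.toFinset.card ≤ 2 := by
  obtain ⟨z, hz⟩ := Multiset.exists_mem_of_ne_zero hne
  have hsub : W.toFinset ⊆ {z, z + x} := by
    intro u hu
    rcases hcl u (Multiset.mem_toFinset.1 hu) z hz with h | h
    · simp [h]
    · simp [h]
  calc W.toFinset.card ≤ ({z, z+x} : Finset G).card := Finset.card_le_card hsub
  _ ≤ 2 := (Finset.card_insert_le _ _).trans (by simp)

lemma class_two_count [DecidableEq G] {x : G} (W : Multiset G)
    (h3 : 3 ≤ Multiset.card W)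
    (hcl : ∀ u ∈ W, ∀ u' ∈ W, u = u' ∨ u = u' + x) : ∃ a ∈ W, 2 ≤ W.count a := by
  have hne : W ≠ 0 := by
    intro h; rw [h] at h3; simp at h3
  have := class_toFinset_le (x := x) W hne hcl
  obtain ⟨a, ha⟩ := exists_two_le_count W (by omega)
  exact ⟨a, Multiset.count_pos.1 (by omega), ha⟩

lemma exU_class [DecidableEq G] {x : G} (hx0 : x ≠ 0) (hx2 : x + x = 0) (W : Multiset G)
    (h4 : 4 ≤ Multiset.card W)
    (hcl : ∀ u ∈ W, ∀ u' ∈ W, u = u' ∨ u = u' + x) :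
    ∃ (k : ℕ) (U₁ U₂ : Multiset G), 1 ≤ k ∧ k ≤ 2 ∧ Multiset.card U₁ = k ∧
      Multiset.card U₂ = k ∧ U₁ + U₂ ≤ W ∧ U₁.sum - U₂.sum = k • x := by
  obtain ⟨z, hz, hz2⟩ := class_two_count (x := x) W (by omega) hcl
  by_cases hglue : ∃ y ∈ W, y = z + x
  · obtain ⟨y, hy, rfl⟩ := hglue
    have hne : z + x ≠ z := by
      intro h
      apply hx0
      have h2 : z + x = z + 0 := by rw [add_zero]; exact h
      exact add_left_cancel h2
    refine ⟨1, {z + x}, {z}, le_refl 1, by omega, by simp, by simp, ?_, by simp⟩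
    rw [Multiset.le_iff_count]
    intro e
    rw [Multiset.count_add]
    by_cases h1 : e = z + x
    · have h1' : 1 ≤ W.count (z + x) := Multiset.count_pos.2 hy
      have e1 : Multiset.count e ({z+x} : Multiset G) = 1 := by
        rw [Multiset.count_singleton, if_pos h1]
      have e2 : Multiset.count e ({z} : Multiset G) = 0 := by
        rw [Multiset.count_singleton, if_neg]
        intro hh; rw [h1] at hh; exact hne hh
      rw [e1, e2, h1]; omega
    · by_cases h2 : e = z
      · have e1 : Multiset.count e ({z+x} : Multiset G) = 0 := by
          rw [Multiset.count_singleton, if_neg]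
          intro hh; rw [h2] at hh; exact hne hh.symm
        have e2 : Multiset.count e ({z} : Multiset G) = 1 := by
          rw [Multiset.count_singleton, if_pos h2]
        rw [e1, e2, h2]; omega
      · have e1 : Multiset.count e ({z+x} : Multiset G) = 0 := by
          rw [Multiset.count_singleton, if_neg h1]
        have e2 : Multiset.count e ({z} : Multiset G) = 0 := by
          rw [Multiset.count_singleton, if_neg h2]
        rw [e1, e2]; omega
  · push_neg at hglue
    have hall : ∀ u ∈ W, u = z := by
      intro u hu
      rcases hcl u hu z hz with h | h
      · exact h
      · exact absurd h (hglue u hu)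
    have hWrep : W = Multiset.replicate (Multiset.card W) z := Multiset.eq_replicate_card.2 hall
    have hcnt : 4 ≤ W.count z := by
      have e1 : W.count z = Multiset.card W := by
        conv_lhs => rw [hWrep]
        rw [Multiset.count_replicate, if_pos rfl]
      omega
    refine ⟨2, {z, z}, {z, z}, by omega, le_refl 2, by simp, by simp, ?_, ?_⟩
    · exact pair_pair_le (Or.inr ⟨hcnt, rfl⟩)
    · simp [two_nsmul, hx2]

lemma exU_two_pairs [DecidableEq G] {x : G} (hx2 : x + x = 0) {S : Multiset G}
    (h4 : S.toFinset.card + 4 ≤ Multiset.card S) :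
    ∃ (U₁ U₂ : Multiset G), Multiset.card U₁ = 2 ∧
      Multiset.card U₂ = 2 ∧ U₁ + U₂ ≤ S ∧ U₁.sum - U₂.sum = 2 • x := by
  obtain ⟨a, ha⟩ := exists_two_le_count S (by omega)
  set S' := S - {a, a} with hS'def
  have hle : ({a, a} : Multiset G) ≤ S := by
    rw [Multiset.le_iff_count]
    intro e
    by_cases h1 : e = a
    · rw [h1]
      have e1 : Multiset.count a ({a, a} : Multiset G) = 2 := by
        simp [Multiset.insert_eq_cons, Multiset.count_cons, Multiset.count_singleton]
      omega
    · have e1 : Multiset.count e ({a, a} : Multiset G) = 0 := by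
        simp [Multiset.insert_eq_cons, Multiset.count_cons, Multiset.count_singleton, h1]
      omega
  have hS'card : Multiset.card S' = Multiset.card S - 2 := by
    rw [hS'def, Multiset.card_sub hle]; simp
  have hS'fin : S'.toFinset.card ≤ S.toFinset.card := by
    apply Finset.card_le_card
    intro e he
    rw [Multiset.mem_toFinset] at he ⊢
    exact Multiset.mem_of_le tsub_le_self he
  obtain ⟨c, hc⟩ := exists_two_le_count S' (by omega)
  have hccount : ∀ e, S'.count e = S.count e - ({a, a} : Multiset G).count e := by
    intro e; rw [hS'def, Multiset.count_sub]
  refine ⟨{a, c}, {a, c}, by simp, by simp, ?_, by simp [two_nsmul, hx2]⟩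
  apply pair_pair_le
  by_cases hac : a = c
  · right
    refine ⟨?_, hac⟩
    have h1 := hccount a
    have e1 : Multiset.count a ({a, a} : Multiset G) = 2 := by simp [Multiset.count_cons]
    have hc' : 2 ≤ Multiset.count a S' := by rw [hac]; exact hc
    omega
  · left
    refine ⟨ha, ?_, hac⟩
    have h1 := hccount c
    have hca : ¬ c = a := fun hh => hac hh.symm
    have e1 : Multiset.count c ({a, a} : Multiset G) = 0 := by
      simp [Multiset.insert_eq_cons, Multiset.count_cons, Multiset.count_singleton, hca]
    omega

end GroupHelpers

section Finish
variable {G : Type*} [AddCommGroup G]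

lemma finish [DecidableEq G] {p : ℕ} (hp : p.Prime) {x : G} (hx2 : x + x = 0)
    (w : G →+ ZMod p) (hker : ∀ g, w g = 0 → g = 0 ∨ g = x)
    (S T₁ T₂ : Multiset G) (hS : S = T₁ + T₂) (hlen : Multiset.card T₁ = Multiset.card T₂)
    (hm : p + 2 ≤ Multiset.card T₁)
    (hsig : T₁.sum - T₂.sum = (Multiset.card T₁) • x)
    (k : ℕ) (U₁ U₂ P : Multiset G) (hk1 : 1 ≤ k) (hk2 : k ≤ 2)
    (hcU₁ : Multiset.card U₁ = k) (hcU₂ : Multiset.card U₂ = k) (hUle : U₁ + U₂ ≤ S)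
    (hUsig : U₁.sum - U₂.sum = k • x)
    (hPle : P ≤ S - (U₁ + U₂)) (hPcard : Multiset.card P = Multiset.card T₁ - k)
    (hPsum : w P.sum = w T₁.sum - w U₁.sum) :
    ∃ A₁ A₂ B₁ B₂ : Multiset G,
      S = A₁ + A₂ + B₁ + B₂ ∧
      A₁ ≠ 0 ∧ A₂ ≠ 0 ∧ B₁ ≠ 0 ∧ B₂ ≠ 0 ∧
      Multiset.card A₁ = Multiset.card A₂ ∧
      Multiset.card B₁ = Multiset.card B₂ ∧
      A₁.sum - A₂.sum = (Multiset.card A₁) • x ∧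
      B₁.sum - B₂.sum = (Multiset.card B₁) • x := by
  have hp2 : 2 ≤ p := hp.two_le
  set m := Multiset.card T₁ with hmdef
  have hcS : Multiset.card S = m + m := by
    rw [hS, Multiset.card_add, ← hlen]
  set V := S - (U₁ + U₂) with hVdef
  have hUS : (U₁ + U₂) + V = S := add_tsub_cancel_of_le hUle
  have hVcard : Multiset.card V = 2*m - 2*k := by
    rw [hVdef, Multiset.card_sub hUle, Multiset.card_add, hcU₁, hcU₂]
    omega
  have hPV : P + (V - P) = V := add_tsub_cancel_of_le hPle
  have hVPcard : Multiset.card (V - P) = m - k := by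
    rw [Multiset.card_sub hPle, hVcard, hPcard]
    omega
  refine ⟨U₁, U₂, P, V - P, ?_, ?_, ?_, ?_, ?_, ?_, ?_, ?_, ?_⟩
  · rw [add_assoc (U₁ + U₂), hPV, hUS]
  · intro h0; rw [h0] at hcU₁; simp at hcU₁; omega
  · intro h0; rw [h0] at hcU₂; simp at hcU₂; omega
  · intro h0; rw [h0] at hPcard; simp at hPcard; omega
  · intro h0
    have := hVPcard
    rw [h0] at this; simp at this; omega
  · rw [hcU₁, hcU₂]
  · rw [hPcard, hVPcard]
  · rw [hcU₁]; exact hUsig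
  · rw [hPcard]
    have hT₂ : T₂.sum = T₁.sum - m • x := by rw [← hsig]; abel
    have hU₂ : U₂.sum = U₁.sum - k • x := by rw [← hUsig]; abel
    have hVPsum : P.sum + (V - P).sum = V.sum := by rw [← Multiset.sum_add, hPV]
    have hVsum : (U₁.sum + U₂.sum) + V.sum = T₁.sum + T₂.sum := by
      rw [← Multiset.sum_add, ← Multiset.sum_add, hUS, hS]
      rw [Multiset.sum_add]
    have hy0 : w (P.sum - T₁.sum + U₁.sum) = 0 := by
      rw [AddMonoidHom.map_add, AddMonoidHom.map_sub, hPsum]; ring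
    have hyy : (P.sum - T₁.sum + U₁.sum) + (P.sum - T₁.sum + U₁.sum) = 0 := by
      rcases hker _ hy0 with h | h
      · rw [h]; simp
      · rw [h]; exact hx2
    have hmk : m • x = (m - k) • x + k • x := by
      rw [← add_nsmul]
      congr 1
      omega
    calc P.sum - (V - P).sum
        = (P.sum - T₁.sum + U₁.sum) + (P.sum - T₁.sum + U₁.sum) + (m • x - k • x) := by
          have h1 : (V - P).sum = V.sum - P.sum := by rw [← hVPsum]; abel
          have h2 : V.sum = T₁.sum + T₂.sum - U₁.sum - U₂.sum := by rw [← hVsum]; abel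
          rw [h1, h2, hT₂, hU₂]
          abel
      _ = (m - k) • x := by rw [hyy, hmk]; abel

end Finish

section CaseA
variable {G : Type*} [AddCommGroup G]

lemma filter_ne_conv {p : ℕ} (w : G →+ ZMod p) (b : ZMod p) (V : Multiset G) :
    V.filter (fun s => w s ≠ b) = V.filter (fun s => ¬ (w s = b)) :=
  Multiset.filter_congr (fun _ _ => Iff.rfl)

lemma filter_partition_w {p : ℕ} (w : G →+ ZMod p) (b : ZMod p) (V : Multiset G) :
    V.filter (fun s => w s = b) + V.filter (fun s => w s ≠ b) = V := by
  rw [filter_ne_conv]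
  exact Multiset.filter_add_not _ V

lemma card_filter_partition_w {p : ℕ} (w : G →+ ZMod p) (b : ZMod p) (V : Multiset G) :
    Multiset.card (V.filter (fun s => w s = b)) + Multiset.card (V.filter (fun s => w s ≠ b))
      = Multiset.card V := by
  rw [← Multiset.card_add, filter_partition_w]

lemma w_sum_class {p : ℕ} (w : G →+ ZMod p) {b : ZMod p} {E : Multiset G}
    (h : ∀ a ∈ E, w a = b) : w E.sum = (Multiset.card E) • b := by
  rw [map_multiset_sum]
  exact sum_map_eq_card_nsmul E (fun a => w a) b h

lemma caseA [DecidableEq G] {p : ℕ} (hp : p.Prime) {x : G} (hx0 : x ≠ 0) (hx2 : x + x = 0)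
    (w : G →+ ZMod p) (hker : ∀ g, w g = 0 → g = 0 ∨ g = x)
    (S T₁ T₂ : Multiset G) (hS : S = T₁ + T₂) (hlen : Multiset.card T₁ = Multiset.card T₂)
    (hm : p + 2 ≤ Multiset.card T₁)
    (v : ZMod p) (hv : Multiset.card (S.filter (fun s => w s ≠ v)) + 2 ≤ p) :
    ∃ (k : ℕ) (U₁ U₂ P : Multiset G), 1 ≤ k ∧ k ≤ 2 ∧ Multiset.card U₁ = k ∧
      Multiset.card U₂ = k ∧ U₁ + U₂ ≤ S ∧ U₁.sum - U₂.sum = k • x ∧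
      P ≤ S - (U₁ + U₂) ∧ Multiset.card P = Multiset.card T₁ - k ∧
      w P.sum = w T₁.sum - w U₁.sum := by
  have hp2 : 2 ≤ p := hp.two_le
  set m := Multiset.card T₁ with hmdef
  have hcS : Multiset.card S = m + m := by rw [hS, Multiset.card_add, ← hlen]
  set r := Multiset.card (S.filter (fun s => w s ≠ v)) with hrdef
  set W := S.filter (fun s => w s = v) with hWdef
  have hWr : Multiset.card W + r = m + m := by
    rw [hWdef, hrdef, card_filter_partition_w, hcS]
  have hW4 : 4 ≤ Multiset.card W := by omega
  have hclass : ∀ u ∈ W, w u = v := by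
    intro u hu
    rw [hWdef] at hu
    exact (Multiset.mem_filter.1 hu).2
  have hcl : ∀ u ∈ W, ∀ u' ∈ W, u = u' ∨ u = u' + x := by
    intro u hu u' hu'
    have h0 : w (u - u') = 0 := by
      rw [AddMonoidHom.map_sub, hclass u hu, hclass u' hu', sub_self]
    rcases hker _ h0 with h | h
    · left; exact sub_eq_zero.1 h
    · right
      have := eq_add_of_sub_eq h
      rw [this, add_comm]
  obtain ⟨k, U₁, U₂, hk1, hk2, hcU₁, hcU₂, hUW, hUsig⟩ := exU_class hx0 hx2 W hW4 hcl
  have hUle : U₁ + U₂ ≤ S := le_trans hUW (Multiset.filter_le _ _)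
  set V := S - (U₁ + U₂) with hVdef
  set J := T₁.filter (fun s => w s ≠ v) with hJdef
  set j := Multiset.card J with hjdef
  have hT₁S : T₁ ≤ S := by rw [hS]; exact le_add_right _ _
  have hjr : j ≤ r := by
    rw [hjdef, hrdef, hJdef]
    exact Multiset.card_le_card (Multiset.filter_le_filter _ hT₁S)
  set l := m - k with hldef
  have hjl : j ≤ l := by omega
  -- U elements lie in class v
  have hUclass : ∀ u ∈ U₁ + U₂, w u = v := fun u hu => hclass u (Multiset.mem_of_le hUW hu)
  have hUfilter_eq : (U₁ + U₂).filter (fun s => w s = v) = U₁ + U₂ :=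
    Multiset.filter_eq_self.2 hUclass
  have hUfilter_ne : (U₁ + U₂).filter (fun s => w s ≠ v) = 0 := by
    rw [Multiset.filter_eq_nil]
    intro a ha hne
    exact hne (hUclass a ha)
  have hVfilter_ne : V.filter (fun s => w s ≠ v) = S.filter (fun s => w s ≠ v) := by
    rw [hVdef, filter_ne_conv, Multiset.filter_sub, ← filter_ne_conv w, ← filter_ne_conv w,
      hUfilter_ne, tsub_zero]
  have hVfilter_eq : V.filter (fun s => w s = v) = W - (U₁ + U₂) := by
    rw [hVdef, Multiset.filter_sub, hUfilter_eq, hWdef]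
  have hVfcard : Multiset.card (V.filter (fun s => w s = v)) = Multiset.card W - 2*k := by
    rw [hVfilter_eq, Multiset.card_sub hUW, Multiset.card_add, hcU₁, hcU₂]
    omega
  have hJle : J ≤ V.filter (fun s => w s ≠ v) := by
    rw [hVfilter_ne, hJdef]
    exact Multiset.filter_le_filter _ hT₁S
  have hpad : l - j ≤ Multiset.card (V.filter (fun s => w s = v)) := by
    rw [hVfcard]; omega
  obtain ⟨E, hEle, hEcard⟩ := exists_le_card (V.filter (fun s => w s = v)) (l - j) hpad
  refine ⟨k, U₁, U₂, J + E, hk1, hk2, hcU₁, hcU₂, hUle, hUsig, ?_, ?_, ?_⟩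
  · calc J + E ≤ V.filter (fun s => w s ≠ v) + V.filter (fun s => w s = v) :=
        add_le_add hJle hEle
    _ = V := by rw [add_comm, filter_partition_w]
  · rw [Multiset.card_add, hEcard, ← hjdef]
    omega
  · -- sums
    have hEclass : ∀ a ∈ E, w a = v := by
      intro a ha
      exact (Multiset.mem_filter.1 (Multiset.mem_of_le hEle ha)).2
    have hwE : w E.sum = ((l - j : ℕ)) • v := by
      rw [w_sum_class w hEclass, hEcard]
    have hwP : w (J + E).sum = w J.sum + ((l - j : ℕ)) • v := by
      rw [Multiset.sum_add, AddMonoidHom.map_add, hwE]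
    have hT₁part : T₁.filter (fun s => w s = v) + J = T₁ := by
      rw [hJdef]; exact filter_partition_w w v T₁
    have hT₁fcard : Multiset.card (T₁.filter (fun s => w s = v)) = m - j := by
      have h2 := card_filter_partition_w w v T₁
      rw [← hJdef] at h2
      omega
    have hwT₁ : w T₁.sum = ((m - j : ℕ)) • v + w J.sum := by
      conv_lhs => rw [← hT₁part]
      rw [Multiset.sum_add, AddMonoidHom.map_add, w_sum_class w
        (fun a ha => (Multiset.mem_filter.1 ha).2), hT₁fcard]
    have hwU₁ : w U₁.sum = (k : ℕ) • v := by
      rw [w_sum_class w (fun a ha => hUclass a (Multiset.mem_of_le (le_add_right _ _) ha)), hcU₁]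
    have hsplit : ((m - j : ℕ)) • v = ((l - j : ℕ)) • v + k • v := by
      rw [← add_nsmul]
      congr 1
      omega
    rw [hwP, hwT₁, hwU₁, hsplit]
    abel

end CaseA

section CaseB
variable {G : Type*} [AddCommGroup G]

lemma class_dichotomy {p : ℕ} {x : G} (w : G →+ ZMod p)
    (hker : ∀ g, w g = 0 → g = 0 ∨ g = x) (b : ZMod p) (S : Multiset G) :
    ∀ u ∈ S.filter (fun s => w s = b), ∀ u' ∈ S.filter (fun s => w s = b),
      u = u' ∨ u = u' + x := by
  intro u hu u' hu'
  have h1 : w u = b := (Multiset.mem_filter.1 hu).2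
  have h2 : w u' = b := (Multiset.mem_filter.1 hu').2
  have h0 : w (u - u') = 0 := by rw [AddMonoidHom.map_sub, h1, h2, sub_self]
  rcases hker _ h0 with h | h
  · left; exact sub_eq_zero.1 h
  · right
    have := eq_add_of_sub_eq h
    rw [this, add_comm]

lemma card_filter_sub {S U : Multiset G} (hU : U ≤ S) (q : G → Prop) [DecidablePred q]
    [DecidableEq G] :
    Multiset.card ((S - U).filter q) = Multiset.card (S.filter q) - Multiset.card (U.filter q)
      ∧ Multiset.card (U.filter q) ≤ Multiset.card (S.filter q) := by
  constructor
  · rw [Multiset.filter_sub, Multiset.card_sub (Multiset.filter_le_filter q hU)]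
  · exact Multiset.card_le_card (Multiset.filter_le_filter q hU)

lemma card_filter_pairpair [DecidableEq G] (q : G → Prop) [DecidablePred q] (a c : G) :
    Multiset.card ((({a, c} : Multiset G) + {a, c}).filter q)
      = 2 * ((if q a then 1 else 0) + (if q c then 1 else 0)) := by
  rw [Multiset.filter_add, Multiset.card_add]
  have h1 : Multiset.card (({a, c} : Multiset G).filter q)
      = (if q a then 1 else 0) + (if q c then 1 else 0) := by
    rw [Multiset.insert_eq_cons, Multiset.filter_cons, Multiset.filter_singleton]
    by_cases ha : q a <;> by_cases hc : q c <;> simp [ha, hc]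
  rw [h1]
  ring

lemma caseB [DecidableEq G] {p : ℕ} (hp : p.Prime) {x : G} (hx0 : x ≠ 0) (hx2 : x + x = 0)
    (w : G →+ ZMod p) (hker : ∀ g, w g = 0 → g = 0 ∨ g = x)
    (S : Multiset G) (hbig : 2*p + 4 ≤ Multiset.card S)
    (hSdist : S.toFinset.card ≤ 2*p)
    (hA : ∀ v : ZMod p, p - 1 ≤ Multiset.card (S.filter (fun s => w s ≠ v)) + 0
        ∧ p + 1 ≤ Multiset.card (S.filter (fun s => w s ≠ v)) + 2) :
    ∃ (k : ℕ) (U₁ U₂ : Multiset G), 1 ≤ k ∧ k ≤ 2 ∧ Multiset.card U₁ = k ∧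
      Multiset.card U₂ = k ∧ U₁ + U₂ ≤ S ∧ U₁.sum - U₂.sum = k • x ∧
      ∀ b : ZMod p, p - 1 ≤ Multiset.card ((S - (U₁ + U₂)).filter (fun s => w s ≠ b)) := by
  have hp2 : 2 ≤ p := hp.two_le
  by_cases hB : ∃ bs : ZMod p, Multiset.card (S.filter (fun s => w s ≠ bs)) ≤ p + 2
  · obtain ⟨bs, hbs⟩ := hB
    set Wb := S.filter (fun s => w s = bs) with hWbdef
    have hWbpart : Multiset.card Wb + Multiset.card (S.filter (fun s => w s ≠ bs))
        = Multiset.card S := by rw [hWbdef]; exact card_filter_partition_w w bs S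
    have hWbcard : p + 2 ≤ Multiset.card Wb := by omega
    by_cases hC : ∃ cs : ZMod p, cs ≠ bs ∧ p + 2 ≤ Multiset.card (S.filter (fun s => w s = cs))
    · obtain ⟨cs, hcsne, hcs⟩ := hC
      set Wc := S.filter (fun s => w s = cs) with hWcdef
      obtain ⟨a, haW, ha2⟩ := class_two_count (x := x) Wb (by omega) (class_dichotomy w hker bs S)
      obtain ⟨c, hcW, hc2⟩ := class_two_count (x := x) Wc (by omega) (class_dichotomy w hker cs S)
      have hwa : w a = bs := (Multiset.mem_filter.1 haW).2
      have hwc : w c = cs := (Multiset.mem_filter.1 hcW).2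
      have hac : a ≠ c := by
        intro h; apply hcsne; rw [← hwc, ← h, hwa]
      have haS : 2 ≤ S.count a := le_trans ha2 (Multiset.count_le_of_le a (Multiset.filter_le _ _))
      have hcS : 2 ≤ S.count c := le_trans hc2 (Multiset.count_le_of_le c (Multiset.filter_le _ _))
      have hUle : ({a, c} : Multiset G) + {a, c} ≤ S := pair_pair_le (Or.inl ⟨haS, hcS, hac⟩)
      refine ⟨2, {a, c}, {a, c}, by omega, le_refl 2, by simp, by simp, hUle, by
        simp [two_nsmul, hx2], ?_⟩
      intro d
      obtain ⟨heq, hle⟩ := card_filter_sub hUle (fun s => w s ≠ d)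
      rw [heq, card_filter_pairpair]
      by_cases hd1 : d = bs
      · have e1 : ¬ (w a ≠ d) := by rw [hwa, hd1]; simp
        have e2 : w c ≠ d := by rw [hwc, hd1]; exact hcsne
        rw [if_neg e1, if_pos e2]
        have hWcle : Wc ≤ S.filter (fun s => w s ≠ d) := by
          rw [hWcdef, hd1]
          apply Multiset.monotone_filter_right
          intro s hs
          rw [hs]; exact hcsne
        have := Multiset.card_le_card hWcle
        omega
      · by_cases hd2 : d = cs
        · have e1 : w a ≠ d := by rw [hwa, hd2]; exact fun h => hcsne h.symm
          have e2 : ¬ (w c ≠ d) := by rw [hwc, hd2]; simp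
          rw [if_pos e1, if_neg e2]
          have hWble : Wb ≤ S.filter (fun s => w s ≠ d) := by
            rw [hWbdef, hd2]
            apply Multiset.monotone_filter_right
            intro s hs
            rw [hs]; exact fun h => hcsne h.symm
          have := Multiset.card_le_card hWble
          omega
        · -- d is a third class; it must be empty-ish
          have h3 := cnt_three_le (f := fun s => (w s : ZMod p)) (b₁ := bs) (b₂ := cs) (b₃ := d)
            (fun h => hcsne h.symm) (fun h => hd1 h.symm) (fun h => hd2 h.symm) S
          have hdpart := card_filter_partition_w w d S
          have e1 : w a ≠ d := by rw [hwa]; exact fun h => hd1 h.symm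
          have e2 : w c ≠ d := by rw [hwc]; exact fun h => hd2 h.symm
          rw [if_pos e1, if_pos e2]
          rw [← hWbdef, ← hWcdef] at h3
          omega
    · push_neg at hC
      obtain ⟨k, U₁, U₂, hk1, hk2, hcU₁, hcU₂, hUW, hUsig⟩ :=
        exU_class hx0 hx2 Wb (by omega) (class_dichotomy w hker bs S)
      have hUle : U₁ + U₂ ≤ S := le_trans hUW (Multiset.filter_le _ _)
      refine ⟨k, U₁, U₂, hk1, hk2, hcU₁, hcU₂, hUle, hUsig, ?_⟩
      intro d
      obtain ⟨heq, hle⟩ := card_filter_sub hUle (fun s => w s ≠ d)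
      rw [heq]
      have hUcard : Multiset.card (U₁ + U₂) = 2 * k := by
        rw [Multiset.card_add, hcU₁, hcU₂]; ring
      have hUclass : ∀ u ∈ U₁ + U₂, w u = bs := by
        intro u hu
        exact (Multiset.mem_filter.1 (Multiset.mem_of_le hUW hu)).2
      by_cases hd : d = bs
      · have e0 : (U₁ + U₂).filter (fun s => w s ≠ d) = 0 := by
          rw [Multiset.filter_eq_nil]
          intro u hu hne
          exact hne (by rw [hUclass u hu, hd])
        rw [e0]
        have h00 : Multiset.card (0 : Multiset G) = 0 := rfl
        rw [h00, Nat.sub_zero]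
        have := (hA d).1
        omega
      · have hfle : Multiset.card ((U₁ + U₂).filter (fun s => w s ≠ d))
            ≤ 2 * k := by
          rw [← hUcard]
          exact Multiset.card_le_card (Multiset.filter_le _ _)
        have hcnt : Multiset.card (S.filter (fun s => w s = d)) ≤ p + 1 := by
          have := hC d hd
          omega
        have hdpart := card_filter_partition_w w d S
        omega
  · push_neg at hB
    obtain ⟨U₁, U₂, hcU₁, hcU₂, hUle, hUsig⟩ := exU_two_pairs hx2 (S := S) (by omega)
    refine ⟨2, U₁, U₂, by omega, le_refl 2, hcU₁, hcU₂, hUle, hUsig, ?_⟩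
    intro d
    obtain ⟨heq, hle⟩ := card_filter_sub hUle (fun s => w s ≠ d)
    rw [heq]
    have hfle : Multiset.card ((U₁ + U₂).filter (fun s => w s ≠ d)) ≤ 4 := by
      have h1 : Multiset.card (U₁ + U₂) = 4 := by
        rw [Multiset.card_add, hcU₁, hcU₂]
      rw [← h1]
      exact Multiset.card_le_card (Multiset.filter_le _ _)
    have := hB d
    omega

end CaseB

section Core
variable {G : Type*} [AddCommGroup G]

theorem core [DecidableEq G] {p : ℕ} (hp : p.Prime) {x : G} (hx0 : x ≠ 0) (hx2 : x + x = 0)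
    (w : G →+ ZMod p) (hker : ∀ g, w g = 0 → g = 0 ∨ g = x)
    (S T₁ T₂ : Multiset G) (hS : S = T₁ + T₂)
    (hlen : Multiset.card T₁ = Multiset.card T₂)
    (hbig : 2*p + 4 ≤ Multiset.card S) (hSdist : S.toFinset.card ≤ 2*p)
    (hsig : T₁.sum - T₂.sum = (Multiset.card T₁) • x) :
    ∃ A₁ A₂ B₁ B₂ : Multiset G,
      S = A₁ + A₂ + B₁ + B₂ ∧
      A₁ ≠ 0 ∧ A₂ ≠ 0 ∧ B₁ ≠ 0 ∧ B₂ ≠ 0 ∧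
      Multiset.card A₁ = Multiset.card A₂ ∧
      Multiset.card B₁ = Multiset.card B₂ ∧
      A₁.sum - A₂.sum = (Multiset.card A₁) • x ∧
      B₁.sum - B₂.sum = (Multiset.card B₁) • x := by
  have hp2 := hp.two_le
  have hcS : Multiset.card S = Multiset.card T₁ + Multiset.card T₁ := by
    rw [hS, Multiset.card_add, ← hlen]
  have hm : p + 2 ≤ Multiset.card T₁ := by omega
  by_cases hA : ∃ v : ZMod p, Multiset.card (S.filter (fun s => w s ≠ v)) + 2 ≤ p
  · obtain ⟨v, hv⟩ := hA
    obtain ⟨k, U₁, U₂, P, hk1, hk2, hcU₁, hcU₂, hUle, hUsig, hPle, hPcard, hPsum⟩ :=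
      caseA hp hx0 hx2 w hker S T₁ T₂ hS hlen hm v hv
    exact finish hp hx2 w hker S T₁ T₂ hS hlen hm hsig k U₁ U₂ P hk1 hk2 hcU₁ hcU₂
      hUle hUsig hPle hPcard hPsum
  · push_neg at hA
    have hA' : ∀ v : ZMod p, p - 1 ≤ Multiset.card (S.filter (fun s => w s ≠ v)) + 0
        ∧ p + 1 ≤ Multiset.card (S.filter (fun s => w s ≠ v)) + 2 := by
      intro v
      have := hA v
      omega
    obtain ⟨k, U₁, U₂, hk1, hk2, hcU₁, hcU₂, hUle, hUsig, hmin⟩ :=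
      caseB hp hx0 hx2 w hker S hbig hSdist hA'
    have hVcard : Multiset.card (S - (U₁ + U₂)) = 2 * (Multiset.card T₁ - k) := by
      rw [Multiset.card_sub hUle, Multiset.card_add, hcU₁, hcU₂]
      omega
    obtain ⟨P, hPle, hPcard, hPsum⟩ := allc hp (fun s => w s) (S - (U₁ + U₂))
      (Multiset.card T₁ - k) (by omega) hVcard hmin (w T₁.sum - w U₁.sum)
    have hPsum' : w P.sum = w T₁.sum - w U₁.sum := by
      rw [map_multiset_sum]
      exact hPsum
    exact finish hp hx2 w hker S T₁ T₂ hS hlen hm hsig k U₁ U₂ P hk1 hk2 hcU₁ hcU₂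
      hUle hUsig hPle hPcard hPsum'

end Core

section Transfer

lemma zmod_eq_p_of_order_two {p : ℕ} (hp : p.Prime) (t : ZMod (2*p)) (ht : addOrderOf t = 2) :
    t = (p : ZMod (2*p)) := by
  have hp2 := hp.two_le
  haveI : NeZero (2*p) := ⟨by omega⟩
  have htz : t ≠ 0 := by
    intro h
    rw [h, addOrderOf_zero] at ht
    omega
  have ht2 : addOrderOf t • t = 0 := addOrderOf_nsmul_eq_zero t
  rw [ht] at ht2
  have h2t : t + t = 0 := by rwa [two_nsmul] at ht2
  have hv : ((2 * t.val : ℕ) : ZMod (2*p)) = 0 := by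
    push_cast
    rw [ZMod.natCast_zmod_val]
    have he : (2 : ZMod (2*p)) * t = t + t := by ring
    rw [he]
    exact h2t
  have hdvd : 2*p ∣ 2*t.val := (ZMod.natCast_eq_zero_iff _ _).1 hv
  obtain ⟨c, hc⟩ := hdvd
  have hc' : 2 * t.val = 2 * (p * c) := by rw [hc]; ring
  have hval : t.val = p * c := by omega
  have hlt : t.val < 2*p := ZMod.val_lt t
  have hc2 : c = 0 ∨ c = 1 := by
    rcases Nat.lt_or_ge c 2 with h | h
    · omega
    · exfalso
      have : p * 2 ≤ p * c := Nat.mul_le_mul_left p h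
      omega
  rcases hc2 with h | h
  · exfalso
    apply htz
    rw [h, mul_zero] at hval
    rw [← ZMod.natCast_zmod_val t, hval]
    simp
  · rw [h, mul_one] at hval
    rw [← ZMod.natCast_zmod_val t, hval]

lemma castHom_zero_iff {p : ℕ} (hp : p.Prime) (z : ZMod (2*p)) :
    (ZMod.castHom (dvd_mul_left p 2) (ZMod p)) z = 0 ↔ z = 0 ∨ z = (p : ZMod (2*p)) := by
  have hp2 := hp.two_le
  haveI : NeZero (2*p) := ⟨by omega⟩
  haveI : NeZero p := ⟨by omega⟩
  rw [ZMod.castHom_apply, ← ZMod.natCast_val, ZMod.natCast_eq_zero_iff]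
  constructor
  · intro hdvd
    obtain ⟨c, hc⟩ := hdvd
    have hlt : z.val < 2*p := ZMod.val_lt z
    have hc2 : c = 0 ∨ c = 1 := by
      rcases Nat.lt_or_ge c 2 with h | h
      · omega
      · exfalso
        have : p * 2 ≤ p * c := Nat.mul_le_mul_left p h
        omega
    rcases hc2 with h | h
    · left
      rw [h, mul_zero] at hc
      rw [← ZMod.natCast_zmod_val z, hc]
      simp
    · right
      rw [h, mul_one] at hc
      rw [← ZMod.natCast_zmod_val z, hc]
  · intro h
    rcases h with h | h
    · rw [h]; simp
    · rw [h, ZMod.val_natCast, Nat.mod_eq_of_lt (by omega)]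

end Transfer

end SplitBF


/-- Let `G` be cyclic of order `2p` with `p` prime, `x ∈ G` the element of order `2`,
and `S = T₁ + T₂` a multiset of even length `≥ 2p + 4` with `|T₁| = |T₂|` and
`σ(T₁) - σ(T₂) = |T₁| • x`. Then `S` splits as `U₁ + U₂ + V₁ + V₂` with the analogous
conditions on both pairs. -/
theorem split_balanced_factorization {G : Type*} [AddCommGroup G]
    (p : ℕ) (hp : p.Prime) (hcyc : IsAddCyclic G) (hcard : Nat.card G = 2 * p)
    (x : G) (hx : addOrderOf x = 2)
    (S T₁ T₂ : Multiset G) (hS : S = T₁ + T₂)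
    (hlen : Multiset.card T₁ = Multiset.card T₂)
    (hbig : 2 * p + 4 ≤ Multiset.card S)
    (hsig : T₁.sum - T₂.sum = (Multiset.card T₁) • x) :
    ∃ U₁ U₂ V₁ V₂ : Multiset G,
      S = U₁ + U₂ + V₁ + V₂ ∧
      U₁ ≠ 0 ∧ U₂ ≠ 0 ∧ V₁ ≠ 0 ∧ V₂ ≠ 0 ∧
      Multiset.card U₁ = Multiset.card U₂ ∧
      Multiset.card V₁ = Multiset.card V₂ ∧
      U₁.sum - U₂.sum = (Multiset.card U₁) • x ∧
      V₁.sum - V₂.sum = (Multiset.card V₁) • x := by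
  classical
  have hp2 := hp.two_le
  haveI : NeZero (2*p) := ⟨by omega⟩
  haveI hGfin : Finite G := Nat.finite_of_card_ne_zero (by omega)
  haveI := Fintype.ofFinite G
  -- the equivalence with ZMod (2*p)
  have e : ZMod (2*p) ≃+ G := by
    rw [← hcard]
    exact (zmodAddCyclicAddEquiv hcyc)
  -- x corresponds to p
  have htord : addOrderOf (e.symm x) = 2 := by
    have := addOrderOf_injective e.symm.toAddMonoidHom e.symm.injective x
    simp only [AddEquiv.coe_toAddMonoidHom] at this
    rw [this]
    exact hx
  have hxp : e.symm x = (p : ZMod (2*p)) := SplitBF.zmod_eq_p_of_order_two hp _ htord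
  -- basic facts about x
  have hx0 : x ≠ 0 := by
    intro h
    rw [h, addOrderOf_zero] at hx
    omega
  have hx2 : x + x = 0 := by
    have h := addOrderOf_nsmul_eq_zero x
    rw [hx, two_nsmul] at h
    exact h
  -- the homomorphism w
  set w : G →+ ZMod p :=
    ((ZMod.castHom (dvd_mul_left p 2) (ZMod p)).toAddMonoidHom.comp
      e.symm.toAddMonoidHom) with hwdef
  have hker : ∀ g : G, w g = 0 → g = 0 ∨ g = x := by
    intro g hg
    rw [hwdef] at hg
    simp only [AddMonoidHom.coe_comp, Function.comp_apply, RingHom.toAddMonoidHom_eq_coe,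
      AddMonoidHom.coe_coe, AddEquiv.coe_toAddMonoidHom] at hg
    rcases (SplitBF.castHom_zero_iff hp (e.symm g)).1 hg with h | h
    · left
      have := congrArg e h
      rw [AddEquiv.apply_symm_apply] at this
      rw [this, AddEquiv.map_zero]
    · right
      rw [← hxp] at h
      have := congrArg e h
      rwa [AddEquiv.apply_symm_apply, AddEquiv.apply_symm_apply] at this
  have hSdist : S.toFinset.card ≤ 2*p := by
    calc S.toFinset.card ≤ Fintype.card G := Finset.card_le_univ _
    _ = Nat.card G := (Nat.card_eq_fintype_card).symm
    _ = 2*p := hcard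
  exact SplitBF.core hp hx0 hx2 w hker S T₁ T₂ hS hlen hbig hSdist hsig
end

section
/- Let G = Q_{4p} with p an odd prime, presented as <a, t | a^{2p} = 1, t^2 = a^p, a*t = t*a^{-1}>, and let R be a finite multiset over G all of whose elements lie in the coset t<a>, say with elements t*a^{r_i}. Then R is a product-one sequence if and only if |R| is even and R can be partitioned into two multisets R^+ and R^- with |R^+| = |R^-| = |R|/2 such that the sum of exponents of R^- minus the sum of exponents of R^+ is congruent to (|R|/2) * p modulo 2p. -/
/-!
In `Q_{4n}` we have `xa x * xa y = a (n + y - x)`. A product of an odd number of elements of the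
coset `xa _` lies in that coset, so is not `1`. An ordering of even length is read as a list of
consecutive pairs `(x, y)`; its product is `a (k n + Σ y - Σ x)` with `k` the number of pairs.
Hence an ordering with product one is the same as a split of `R` into first factors `R⁺` and
second factors `R⁻` with `k n + σ(R⁻) - σ(R⁺) = 0`, and `-k n = k n` because `2 n = 0`.
-/

namespace List

variable {α : Type*}

theorem coe_flatMap_pair (L : List (α × α)) :
    ((L.flatMap fun q => [q.1, q.2] : List α) : Multiset α) =
      (L.map Prod.fst : Multiset α) + (L.map Prod.snd : Multiset α) := by
  induction L with
  | nil => rfl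
  | cons q L ih =>
    simp only [flatMap_cons, map_cons, ← Multiset.cons_coe, ih, cons_append, nil_append]
    simpa using perm_middle.symm

theorem exists_flatMap_pair_eq_of_even_length :
    ∀ {l : List α}, Even l.length →
      ∃ L : List (α × α), L.flatMap (fun q => [q.1, q.2]) = l
  | [], _ => ⟨[], rfl⟩
  | [_], h => by simp at h
  | x :: y :: l, h => by
    obtain ⟨L, rfl⟩ := exists_flatMap_pair_eq_of_even_length (l := l)
      (by simpa [parity_simps] using h)
    exact ⟨(x, y) :: L, rfl⟩

end List

theorem isProductOne_map_iff {α G : Type*} [Group G] {f : α → G} (hf : Function.Injective f)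
    (R : Multiset α) :
    IsProductOne (R.map f) ↔ ∃ l : List α, (l : Multiset α) = R ∧ (l.map f).prod = 1 := by
  constructor
  · rintro ⟨l', hl', hprod⟩
    obtain ⟨l, rfl⟩ : l' ∈ Set.range (List.map f) := by
      rw [Set.range_list_map]
      intro x hx
      obtain ⟨y, -, rfl⟩ := Multiset.mem_map.mp (hl' ▸ Multiset.mem_coe.mpr hx)
      exact ⟨y, rfl⟩
    exact ⟨l, Multiset.map_injective hf (by simpa using hl'), hprod⟩
  · rintro ⟨l, rfl, hprod⟩
    exact ⟨l.map f, by simp, hprod⟩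

namespace QuaternionGroup

variable {n : ℕ}

theorem natCast_add_natCast_self : (n : ZMod (2 * n)) + n = 0 := by
  rw [← two_mul]
  exact_mod_cast ZMod.natCast_self (2 * n)

theorem prod_map_xa_flatMap_pair (L : List (ZMod (2 * n) × ZMod (2 * n))) :
    ((L.flatMap fun q => [q.1, q.2]).map xa).prod =
      a ((L.length * n : ZMod (2 * n)) + (L.map Prod.snd).sum - (L.map Prod.fst).sum) := by
  induction L with
  | nil => simp
  | cons q L ih =>
    simp only [List.flatMap_cons, List.map_append, List.prod_append, ih, List.map_cons,
      List.map_nil, List.prod_cons, List.prod_nil, mul_one, xa_mul_xa, a_mul_a, List.length_cons,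
      List.sum_cons]
    congr 1
    push_cast
    ring

theorem prod_map_xa_ne_one_of_odd_length {l : List (ZMod (2 * n))} (h : Odd l.length) :
    (l.map xa).prod ≠ 1 := by
  obtain _ | ⟨x, l⟩ := l
  · simp at h
  obtain ⟨L, rfl⟩ := List.exists_flatMap_pair_eq_of_even_length (l := l)
    (by simpa [parity_simps] using h)
  rw [List.map_cons, List.prod_cons, prod_map_xa_flatMap_pair, xa_mul_a, one_def]
  nofun

theorem isProductOne_map_xa_iff (R : Multiset (ZMod (2 * n))) :
    IsProductOne (R.map (xa : ZMod (2 * n) → QuaternionGroup n)) ↔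
      ∃ L : List (ZMod (2 * n) × ZMod (2 * n)),
        (L.map Prod.fst : Multiset _) + (L.map Prod.snd : Multiset _) = R ∧
          (L.length * n : ZMod (2 * n)) + (L.map Prod.snd).sum - (L.map Prod.fst).sum = 0 := by
  rw [isProductOne_map_iff fun _ _ h => xa.inj h]
  constructor
  · rintro ⟨l, rfl, hprod⟩
    obtain ⟨L, rfl⟩ := List.exists_flatMap_pair_eq_of_even_length
      (Nat.not_odd_iff_even.mp fun h => prod_map_xa_ne_one_of_odd_length h hprod)
    rw [prod_map_xa_flatMap_pair, one_def] at hprod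
    exact ⟨L, (List.coe_flatMap_pair L).symm, a.inj hprod⟩
  · rintro ⟨L, rfl, hL⟩
    exact ⟨_, List.coe_flatMap_pair L, by rw [prod_map_xa_flatMap_pair, hL, a_zero]⟩

end QuaternionGroup

theorem productOne_iff_balanced_split_general (p : ℕ)
    (R : Multiset (ZMod (2 * p))) :
    IsProductOne (R.map (QuaternionGroup.xa : ZMod (2 * p) → QuaternionGroup p)) ↔
      Even (Multiset.card R) ∧
        ∃ Rp Rm : Multiset (ZMod (2 * p)), R = Rp + Rm ∧
          Multiset.card Rp = Multiset.card Rm ∧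
          Rm.sum - Rp.sum = ((Multiset.card Rp : ZMod (2 * p)) * (p : ZMod (2 * p))) := by
  rw [QuaternionGroup.isProductOne_map_xa_iff]
  constructor
  · rintro ⟨L, rfl, hL⟩
    refine ⟨by simp, _, _, rfl, by simp, ?_⟩
    simp only [Multiset.sum_coe, Multiset.coe_card, List.length_map]
    linear_combination hL - (L.length : ZMod (2 * p)) * QuaternionGroup.natCast_add_natCast_self
  · rintro ⟨-, Rp, Rm, rfl, hcard, hsum⟩
    have hlen : Rp.toList.length = Rm.toList.length := by simpa using hcard
    refine ⟨Rp.toList.zip Rm.toList, ?_, ?_⟩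
    · simp [List.map_fst_zip hlen.le, List.map_snd_zip hlen.ge]
    · simp only [List.map_fst_zip hlen.le, List.map_snd_zip hlen.ge, List.length_zip, ← hlen,
        min_self, Multiset.length_toList, Multiset.sum_toList]
      linear_combination
        hsum + (Multiset.card Rp : ZMod (2 * p)) * QuaternionGroup.natCast_add_natCast_self

/-- In `Q_{4p}` (`p` an odd prime), a multiset of elements `t * a ^ rᵢ` from the coset
`t⟨a⟩` (encoded by its exponents `rᵢ ∈ ℤ/2pℤ`) is a product-one sequence iff its length
is even and it can be split into halves `R⁺, R⁻` of equal size with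
`σ(R⁻) - σ(R⁺) ≡ (|R|/2)·p (mod 2p)`. -/
theorem productOne_iff_balanced_split (p : ℕ) (hp : p.Prime) (hodd : Odd p)
    (R : Multiset (ZMod (2 * p))) :
    IsProductOne (R.map (QuaternionGroup.xa : ZMod (2 * p) → QuaternionGroup p)) ↔
      Even (Multiset.card R) ∧
        ∃ Rp Rm : Multiset (ZMod (2 * p)), R = Rp + Rm ∧
          Multiset.card Rp = Multiset.card Rm ∧
          Rm.sum - Rp.sum = ((Multiset.card Rp : ZMod (2 * p)) * (p : ZMod (2 * p))) :=
  productOne_iff_balanced_split_general p R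
end
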